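/- arXiv:2310.05609 — 4 statements merged into one kernel-verified Lean document; each statement's English description precedes it below -/
import Mathlib

section
/- For every integer n ≥ 3, the edge-locating chromatic number of the path P_n on n vertices equals 2 if n = 3, and equals 3 if n ≥ 4. -/
open SimpleGraph

/-- Distance from a vertex to an edge: the minimum of the distances to the two endpoints. -/
noncomputable def edgeDist {V : Type*} (G : SimpleGraph V) (v : V) (e : Sym2 V) : ℕ :=
  Sym2.lift ⟨fun x y => min (G.dist v x) (G.dist v y), fun _ _ => min_comm _ _⟩ e

/-- Distance (in `ℕ∞`) from a vertex to the `i`-th color class of an edge coloring `c`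
(it is `⊤` if the class is empty). -/
noncomputable def classDist {V : Type*} (G : SimpleGraph V) {k : ℕ} (c : Sym2 V → Fin k)
    (v : V) (i : Fin k) : ℕ∞ :=
  ⨅ e ∈ {e | e ∈ G.edgeSet ∧ c e = i}, (edgeDist G v e : ℕ∞)

/-- `c` is an edge-locating `k`-coloring of `G`: it is a proper edge coloring (distinct edges
sharing an endpoint get different colors), and distinct vertices have distinct edge color codes
`(d(v, C_1), …, d(v, C_k))`. -/
def IsEdgeLocatingColoring {V : Type*} (G : SimpleGraph V) {k : ℕ} (c : Sym2 V → Fin k) : Prop :=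
  (∀ e ∈ G.edgeSet, ∀ f ∈ G.edgeSet, e ≠ f → (∃ x, x ∈ e ∧ x ∈ f) → c e ≠ c f) ∧
  (∀ u v : V, u ≠ v → ∃ i, classDist G c u i ≠ classDist G c v i)

/-- The edge-locating chromatic number `χ'_L(G)`: the least `k` such that `G` admits an
edge-locating `k`-coloring. -/
noncomputable def edgeLocatingChromaticNumber {V : Type*} (G : SimpleGraph V) : ℕ :=
  sInf {k | ∃ c : Sym2 V → Fin k, IsEdgeLocatingColoring G c}

/-- The join `G + H` of two graphs: all edges of `G`, all edges of `H`, and all edges between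
a vertex of `G` and a vertex of `H`. -/
def graphJoin {α β : Type*} (G : SimpleGraph α) (H : SimpleGraph β) : SimpleGraph (α ⊕ β) :=
  SimpleGraph.fromRel (fun x y =>
    (∃ a b, x = Sum.inl a ∧ y = Sum.inl b ∧ G.Adj a b) ∨
    (∃ a b, x = Sum.inr a ∧ y = Sum.inr b ∧ H.Adj a b) ∨
    (∃ a b, x = Sum.inl a ∧ y = Sum.inr b))

/-- A set `M` of edges of `G` forming a matching: pairwise vertex-disjoint edges of `G`. -/
def IsMatchingSet {V : Type*} (G : SimpleGraph V) (M : Set (Sym2 V)) : Prop :=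
  M ⊆ G.edgeSet ∧ ∀ e ∈ M, ∀ f ∈ M, e ≠ f → ∀ x, x ∈ e → x ∉ f

lemma walk_bound {n : ℕ} {u v : Fin n} (w : (pathGraph n).Walk u v) :
    u.val ≤ v.val + w.length ∧ v.val ≤ u.val + w.length := by
  induction w with
  | nil => simp
  | @cons a b c h p ih =>
    rw [pathGraph_adj] at h
    simp only [SimpleGraph.Walk.length_cons]
    omega

lemma walk_exists {n : ℕ} : ∀ (d : ℕ) (u v : Fin n), u.val + d = v.val →
    ∃ w : (pathGraph n).Walk u v, w.length = d := by
  intro d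
  induction d with
  | zero =>
    intro u v h
    have : u = v := Fin.ext (by omega)
    subst this; exact ⟨.nil, rfl⟩
  | succ d ih =>
    intro u v h
    have hu1 : u.val + 1 < n := by omega
    have hadj : (pathGraph n).Adj u ⟨u.val + 1, hu1⟩ := by rw [pathGraph_adj]; left; rfl
    obtain ⟨w, hw⟩ := ih ⟨u.val + 1, hu1⟩ v (by simp; omega)
    exact ⟨.cons hadj w, by simp [hw]⟩

lemma pathGraph_dist' {n : ℕ} (u v : Fin n) (h : u.val ≤ v.val) :
    (pathGraph n).dist u v = v.val - u.val := by
  obtain ⟨w, hw⟩ := walk_exists (v.val - u.val) u v (by omega)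
  have h1 : (pathGraph n).dist u v ≤ v.val - u.val := hw ▸ SimpleGraph.dist_le w
  obtain ⟨p, hp⟩ := (Reachable.exists_walk_length_eq_dist ⟨w⟩)
  have := walk_bound p
  omega

lemma pathGraph_dist {n : ℕ} (u v : Fin n) :
    (pathGraph n).dist u v = max u.val v.val - min u.val v.val := by
  rcases le_total u.val v.val with h | h
  · rw [pathGraph_dist' u v h]; omega
  · rw [SimpleGraph.dist_comm, pathGraph_dist' v u h]; omega

/-- the i-th edge of the path -/
def E {n : ℕ} (i : ℕ) (h : i + 1 < n) : Sym2 (Fin n) :=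
  s(⟨i, by omega⟩, ⟨i + 1, h⟩)

lemma mem_edgeSet_iff {n : ℕ} (e : Sym2 (Fin n)) :
    e ∈ (pathGraph n).edgeSet ↔ ∃ i, ∃ h : i + 1 < n, e = E i h := by
  induction e using Sym2.ind with
  | _ x y =>
    rw [SimpleGraph.mem_edgeSet, pathGraph_adj]
    constructor
    · rintro (h | h)
      · exact ⟨x.val, by omega, by
          simp only [E]; rw [Sym2.eq_iff]; left; exact ⟨Fin.ext rfl, Fin.ext h.symm⟩⟩
      · exact ⟨y.val, by omega, by
          simp only [E]; rw [Sym2.eq_iff]; right; exact ⟨Fin.ext h.symm, Fin.ext rfl⟩⟩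
    · rintro ⟨i, h, he⟩
      simp [E, Sym2.eq_iff] at he
      rcases he with ⟨h1, h2⟩ | ⟨h1, h2⟩ <;> subst h1 <;> subst h2 <;> simp
lemma edgeDist_E {n : ℕ} (v : Fin n) (i : ℕ) (h : i + 1 < n) :
    edgeDist (pathGraph n) v (E i h) =
      min (max v.val i - min v.val i) (max v.val (i+1) - min v.val (i+1)) := by
  simp [edgeDist, E, Sym2.lift_mk, pathGraph_dist]

lemma classDist_le {V : Type*} (G : SimpleGraph V) {k : ℕ} (c : Sym2 V → Fin k)
    (v : V) (i : Fin k) {e : Sym2 V} (he : e ∈ G.edgeSet) (hc : c e = i) :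
    classDist G c v i ≤ (edgeDist G v e : ℕ∞) :=
  iInf₂_le e ⟨he, hc⟩

lemma le_classDist {V : Type*} (G : SimpleGraph V) {k : ℕ} (c : Sym2 V → Fin k)
    (v : V) (i : Fin k) (m : ℕ∞) (h : ∀ e ∈ G.edgeSet, c e = i → m ≤ (edgeDist G v e : ℕ∞)) :
    m ≤ classDist G c v i :=
  le_iInf₂ fun e he => h e he.1 he.2

lemma classDist_eq_zero_iff {V : Type*} (G : SimpleGraph V) {k : ℕ} (c : Sym2 V → Fin k)
    (v : V) (i : Fin k) :
    classDist G c v i = 0 ↔ ∃ e ∈ G.edgeSet, c e = i ∧ edgeDist G v e = 0 := by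
  constructor
  · intro h
    by_contra hc
    push_neg at hc
    have : (1 : ℕ∞) ≤ classDist G c v i := by
      apply le_classDist
      intro e he hce
      have := hc e he hce
      exact_mod_cast Nat.one_le_iff_ne_zero.2 this
    rw [h] at this
    exact absurd this (by simp)
  · rintro ⟨e, he, hce, hd⟩
    have := classDist_le G c v i he hce
    rw [hd] at this
    simpa using this

lemma classDist_eq_of_unique {V : Type*} (G : SimpleGraph V) {k : ℕ} (c : Sym2 V → Fin k)
    (v : V) (i : Fin k) {e : Sym2 V} (he : e ∈ G.edgeSet) (hc : c e = i)
    (huniq : ∀ f ∈ G.edgeSet, c f = i → f = e) :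
    classDist G c v i = (edgeDist G v e : ℕ∞) := by
  refine le_antisymm (classDist_le G c v i he hc) ?_
  exact le_classDist G c v i _ fun f hf hcf => by rw [huniq f hf hcf]

lemma E_inj {n : ℕ} {i j : ℕ} (hi : i + 1 < n) (hj : j + 1 < n) (h : E i hi = E (n := n) j hj) :
    i = j := by
  rw [E, E, Sym2.eq_iff] at h
  rcases h with ⟨h1, h2⟩ | ⟨h1, h2⟩ <;>
    simp only [Fin.mk.injEq] at h1 h2 <;> omega

lemma mem_E_iff {n : ℕ} {x : Fin n} {i : ℕ} (hi : i + 1 < n) :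
    x ∈ E i hi ↔ x.val = i ∨ x.val = i + 1 := by
  rw [E, Sym2.mem_iff]
  constructor
  · rintro (rfl | rfl) <;> simp
  · rintro (h | h)
    · left; exact Fin.ext h
    · right; exact Fin.ext h

noncomputable def pcol {n k : ℕ} (f : ℕ → Fin k) : Sym2 (Fin n) → Fin k :=
  Sym2.lift ⟨fun x y => f (min x.val y.val), fun x y => by simp only []; rw [min_comm]⟩

lemma pcol_E {n k : ℕ} (f : ℕ → Fin k) (i : ℕ) (h : i + 1 < n) :
    pcol f (E i h) = f i := by
  simp only [pcol, E, Sym2.lift_mk]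
  congr 1
  omega

lemma pcol_proper {n k : ℕ} (f : ℕ → Fin k) (hf : ∀ i, i + 2 < n → f i ≠ f (i + 1)) :
    ∀ e ∈ (pathGraph n).edgeSet, ∀ g ∈ (pathGraph n).edgeSet, e ≠ g →
      (∃ x, x ∈ e ∧ x ∈ g) → pcol f e ≠ pcol f g := by
  intro e he g hg hne ⟨x, hxe, hxg⟩
  obtain ⟨i, hi, rfl⟩ := (mem_edgeSet_iff e).1 he
  obtain ⟨j, hj, rfl⟩ := (mem_edgeSet_iff g).1 hg
  rw [mem_E_iff] at hxe hxg
  have hij : i ≠ j := fun h => hne (by subst h; rfl)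
  rw [pcol_E, pcol_E]
  have : j = i + 1 ∨ i = j + 1 := by omega
  rcases this with rfl | rfl
  · exact hf i (by omega)
  · exact (hf j (by omega)).symm

lemma mem_edge {n : ℕ} (i : ℕ) (h : i + 1 < n) : E i h ∈ (pathGraph n).edgeSet :=
  (mem_edgeSet_iff _).2 ⟨i, h, rfl⟩

lemma not_mem_small {n k : ℕ} (hn : 3 ≤ n) (hk : k ≤ 1) :
    ¬ ∃ c : Sym2 (Fin n) → Fin k, IsEdgeLocatingColoring (pathGraph n) c := by
  rintro ⟨c, hproper, -⟩
  have h0 : (0:ℕ) + 1 < n := by omega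
  have h1 : (1:ℕ) + 1 < n := by omega
  have hne : E 0 h0 ≠ E 1 h1 := fun h => by simpa using E_inj h0 h1 h
  have hx : (⟨1, by omega⟩ : Fin n) ∈ E 0 h0 := (mem_E_iff h0).2 (Or.inr rfl)
  have hx' : (⟨1, by omega⟩ : Fin n) ∈ E 1 h1 := (mem_E_iff h1).2 (Or.inl rfl)
  have hcc := hproper _ (mem_edge 0 h0) _ (mem_edge 1 h1) hne ⟨_, hx, hx'⟩
  have a := (c (E 0 h0)).isLt
  have b := (c (E 1 h1)).isLt
  have : (c (E 0 h0)).val ≠ (c (E 1 h1)).val := fun h => hcc (Fin.ext h)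
  omega

lemma not_mem_two {n : ℕ} (hn : 4 ≤ n) :
    ¬ ∃ c : Sym2 (Fin n) → Fin 2, IsEdgeLocatingColoring (pathGraph n) c := by
  rintro ⟨c, hproper, hloc⟩
  have h0 : (0:ℕ) + 1 < n := by omega
  have h1 : (1:ℕ) + 1 < n := by omega
  have h2 : (2:ℕ) + 1 < n := by omega
  have hne01 : E 0 h0 ≠ E 1 h1 := fun h => by simpa using E_inj h0 h1 h
  have hne12 : E 1 h1 ≠ E 2 h2 := fun h => by simpa using E_inj h1 h2 h
  set u : Fin n := ⟨1, by omega⟩ with hu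
  set w : Fin n := ⟨2, by omega⟩ with hw
  have hcc01 : c (E 0 h0) ≠ c (E 1 h1) :=
    hproper _ (mem_edge 0 h0) _ (mem_edge 1 h1) hne01
      ⟨u, (mem_E_iff h0).2 (Or.inr rfl), (mem_E_iff h1).2 (Or.inl rfl)⟩
  have hcc12 : c (E 1 h1) ≠ c (E 2 h2) :=
    hproper _ (mem_edge 1 h1) _ (mem_edge 2 h2) hne12
      ⟨w, (mem_E_iff h1).2 (Or.inr rfl), (mem_E_iff h2).2 (Or.inl rfl)⟩
  have hzero : ∀ (x : Fin n) (a b : ℕ) (ha : a + 1 < n) (hb : b + 1 < n),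
      c (E a ha) ≠ c (E b hb) → (x.val = a ∨ x.val = a + 1) → (x.val = b ∨ x.val = b + 1) →
      ∀ i, classDist (pathGraph n) c x i = 0 := by
    intro x a b ha hb hab hxa hxb i
    have hcov : c (E a ha) = i ∨ c (E b hb) = i := by
      by_contra hcon
      push_neg at hcon
      have p1 := (c (E a ha)).isLt
      have p2 := (c (E b hb)).isLt
      have p3 := i.isLt
      have q1 : (c (E a ha)).val ≠ i.val := fun h => hcon.1 (Fin.ext h)
      have q2 : (c (E b hb)).val ≠ i.val := fun h => hcon.2 (Fin.ext h)
      have q3 : (c (E a ha)).val ≠ (c (E b hb)).val := fun h => hab (Fin.ext h)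
      omega
    rcases hcov with hcov | hcov
    · refine (classDist_eq_zero_iff _ _ _ _).2 ⟨_, mem_edge a ha, hcov, ?_⟩
      rw [edgeDist_E]; omega
    · refine (classDist_eq_zero_iff _ _ _ _).2 ⟨_, mem_edge b hb, hcov, ?_⟩
      rw [edgeDist_E]; omega
  obtain ⟨i, hi⟩ := hloc u w (by simp [hu, hw, Fin.ext_iff])
  have z1 := hzero u 0 1 h0 h1 hcc01 (Or.inr rfl) (Or.inl rfl) i
  have z2 := hzero w 1 2 h1 h2 hcc12 (Or.inr rfl) (Or.inl rfl) i
  rw [z1, z2] at hi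
  exact hi rfl

lemma mem_three : ∃ c : Sym2 (Fin 3) → Fin 2, IsEdgeLocatingColoring (pathGraph 3) c := by
  classical
  set f : ℕ → Fin 2 := fun i => if i = 0 then 0 else 1 with hf
  refine ⟨pcol f, pcol_proper f ?_, ?_⟩
  · intro i h
    have : i = 0 := by omega
    subst this
    simp [hf]
  · have h0 : (0:ℕ) + 1 < 3 := by omega
    have h1 : (1:ℕ) + 1 < 3 := by omega
    have key : ∀ (v : Fin 3) (a : ℕ) (ha : a + 1 < 3) (i : Fin 2), f a = i →
        (∀ j, j + 1 < 3 → f j = i → j = a) →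
        classDist (pathGraph 3) (pcol f) v i =
          ((min (max v.val a - min v.val a) (max v.val (a+1) - min v.val (a+1)) : ℕ) : ℕ∞) := by
      intro v a ha i hfa huniq
      rw [← edgeDist_E v a ha]
      refine classDist_eq_of_unique _ _ _ _ (mem_edge a ha) (by rw [pcol_E]; exact hfa) ?_
      intro e he hce
      obtain ⟨j, hj, rfl⟩ := (mem_edgeSet_iff e).1 he
      rw [pcol_E] at hce
      have : j = a := huniq j hj hce
      subst this; rfl
    have key0 : ∀ v : Fin 3, classDist (pathGraph 3) (pcol f) v 0 =
        ((min v.val (max v.val 1 - min v.val 1) : ℕ) : ℕ∞) := by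
      intro v
      have := key v 0 h0 0 (by simp [hf]) (by intro j hj hfj; by_contra hc; simp [hf, hc] at hfj)
      simpa using this
    have key1 : ∀ v : Fin 3, classDist (pathGraph 3) (pcol f) v 1 =
        ((min (max v.val 1 - min v.val 1) (max v.val 2 - min v.val 2) : ℕ) : ℕ∞) := by
      intro v
      exact key v 1 h1 1 (by simp [hf])
        (by
          intro j hj hfj
          rcases (by omega : j = 0 ∨ j = 1) with rfl | rfl
          · exact absurd hfj (by simp [hf])
          · rfl)
    intro u v huv
    fin_cases u <;> fin_cases v <;> first
      | exact absurd rfl huv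
      | (refine ⟨0, ?_⟩
         rw [key0, key0]
         intro hcon
         rw [Nat.cast_inj] at hcon
         simp at hcon
         done)
      | (refine ⟨1, ?_⟩
         rw [key1, key1]
         intro hcon
         rw [Nat.cast_inj] at hcon
         simp at hcon
         done)

lemma mem_big {n : ℕ} (hn : 4 ≤ n) :
    ∃ c : Sym2 (Fin n) → Fin 3, IsEdgeLocatingColoring (pathGraph n) c := by
  classical
  set f : ℕ → Fin 3 := fun i => if i = n - 2 then 2 else ⟨i % 2, by omega⟩ with hf
  have fval : ∀ i, i ≠ n - 2 → (f i).val = i % 2 := by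
    intro i hi; simp [hf, hi]
  have fval2 : (f (n-2)).val = 2 := by simp [hf]
  refine ⟨pcol f, pcol_proper f ?_, ?_⟩
  · intro i h hcon
    have hcv := congrArg Fin.val hcon
    by_cases h1 : i + 1 = n - 2
    · rw [fval i (by omega), h1, fval2] at hcv; omega
    · rw [fval i (by omega), fval (i+1) h1] at hcv; omega
  · have hE2 : (n - 2) + 1 < n := by omega
    have hE3 : (n - 3) + 1 < n := by omega
    have key2 : ∀ v : Fin n, classDist (pathGraph n) (pcol f) v 2 =
        ((min (max v.val (n-2) - min v.val (n-2)) (max v.val (n-1) - min v.val (n-1)) : ℕ) : ℕ∞) := by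
      intro v
      have : max v.val (n-2+1) - min v.val (n-2+1) = max v.val (n-1) - min v.val (n-1) := by omega
      rw [← this, ← edgeDist_E v (n-2) hE2]
      refine classDist_eq_of_unique _ _ _ _ (mem_edge (n-2) hE2) (by rw [pcol_E]; simp [hf]) ?_
      intro e he hce
      obtain ⟨j, hj, rfl⟩ := (mem_edgeSet_iff e).1 he
      rw [pcol_E] at hce
      have hcv := congrArg Fin.val hce
      have : j = n - 2 := by
        by_contra hcj
        rw [fval j hcj] at hcv
        simp at hcv
        omega
      subst this; rfl
    have sub : ∀ x y : Fin n, x.val = n - 2 → y.val = n - 1 →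
        ∃ i, classDist (pathGraph n) (pcol f) x i ≠ classDist (pathGraph n) (pcol f) y i := by
      intro x y hx hy
      refine ⟨f (n-3), ?_⟩
      have hx0 : classDist (pathGraph n) (pcol f) x (f (n-3)) = 0 := by
        refine (classDist_eq_zero_iff _ _ _ _).2 ⟨_, mem_edge (n-3) hE3, by rw [pcol_E], ?_⟩
        rw [edgeDist_E]
        omega
      rw [hx0]
      intro hy0
      obtain ⟨e, he, hce, hd⟩ := (classDist_eq_zero_iff _ _ _ _).1 hy0.symm
      obtain ⟨j, hj, rfl⟩ := (mem_edgeSet_iff e).1 he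
      rw [pcol_E] at hce
      rw [edgeDist_E] at hd
      have hjn : j = n - 2 := by omega
      subst hjn
      have hcv := congrArg Fin.val hce
      rw [fval2, fval (n-3) (by omega)] at hcv
      omega
    intro u v huv
    have hval : u.val ≠ v.val := fun h => huv (Fin.ext h)
    by_cases hc : (min (max u.val (n-2) - min u.val (n-2)) (max u.val (n-1) - min u.val (n-1))) =
        (min (max v.val (n-2) - min v.val (n-2)) (max v.val (n-1) - min v.val (n-1)))
    · have hu := u.isLt
      have hv := v.isLt
      have : (u.val = n - 2 ∧ v.val = n - 1) ∨ (u.val = n - 1 ∧ v.val = n - 2) := by omega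
      rcases this with ⟨h1, h2⟩ | ⟨h1, h2⟩
      · exact sub u v h1 h2
      · obtain ⟨i, hi⟩ := sub v u h2 h1
        exact ⟨i, hi.symm⟩
    · exact ⟨2, by rw [key2 u, key2 v]; exact fun h => hc (Nat.cast_inj.1 h)⟩


/-- For every integer `n ≥ 3`, the edge-locating chromatic number of the path `P_n` equals
`2` if `n = 3` and `3` if `n ≥ 4`. -/
theorem stmt_0 (n : ℕ) (hn : 3 ≤ n) :
    edgeLocatingChromaticNumber (SimpleGraph.pathGraph n) = if n = 3 then 2 else 3 := by
  rw [edgeLocatingChromaticNumber]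
  by_cases h3 : n = 3
  · subst h3
    rw [if_pos rfl]
    have h2 : 2 ∈ {k | ∃ c : Sym2 (Fin 3) → Fin k, IsEdgeLocatingColoring (pathGraph 3) c} :=
      mem_three
    refine le_antisymm (Nat.sInf_le h2) ?_
    have hm := Nat.sInf_mem ⟨2, h2⟩
    by_contra hlt
    push_neg at hlt
    exact not_mem_small (le_refl 3) (by omega) hm
  · rw [if_neg h3]
    have h4 : 4 ≤ n := by omega
    have h3m : 3 ∈ {k | ∃ c : Sym2 (Fin n) → Fin k, IsEdgeLocatingColoring (pathGraph n) c} :=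
      mem_big h4
    refine le_antisymm (Nat.sInf_le h3m) ?_
    have hm := Nat.sInf_mem ⟨3, h3m⟩
    by_contra hlt
    push_neg at hlt
    obtain h | h := (by omega :
        sInf {k | ∃ c : Sym2 (Fin n) → Fin k, IsEdgeLocatingColoring (pathGraph n) c} ≤ 1 ∨
        sInf {k | ∃ c : Sym2 (Fin n) → Fin k, IsEdgeLocatingColoring (pathGraph n) c} = 2)
    · exact not_mem_small hn h hm
    · rw [h] at hm
      exact not_mem_two h4 hm
end

section
/- For every integer n ≥ 3, the edge-locating chromatic number of the cycle C_n equals 3 if n = 3, and equals 4 if n ≥ 4. -/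
open SimpleGraph

/-!
In a proper `3`-edge-coloring of a cycle every vertex misses exactly one color. Two vertices
missing the same color `i` lie at distance `0` from both other classes, so only `d(·, C_i)` can
separate them. If `C_i` is empty both distances are `⊤`; otherwise, as soon as two vertices miss
`i`, the runs of such vertices around the cycle have two distinct endpoints next to an edge of
color `i`, both at distance `1` from `C_i`. So each color is missed by at most one vertex, and
`n ≤ 3`. Conversely, four colors suffice for every cycle: give the two edges at `0` private colors
and alternate the other two along the remaining path; the distances to those two edges already
determine the vertex. For `C_3`, coloring `s(w, w + 1)` by `w` makes each vertex miss a different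
color, while two colors cannot even properly color a triangle.
-/

open scoped Fin.CommRing

namespace Fin

lemma sym2_self_add_one_injective {n : ℕ} :
    Function.Injective fun w : Fin (n + 3) => s(w, w + 1) := by
  intro v w h
  rcases Sym2.eq_iff.mp h with ⟨h, -⟩ | ⟨h₁, h₂⟩
  · exact h
  · have : (2 : Fin (n + 3)) = 0 := by linear_combination h₂ - h₁
    simp [Fin.ext_iff, Nat.mod_eq_of_lt (show 2 < n + 3 by omega)] at this

variable {n : ℕ} [NeZero n] {U : Set (Fin n)}

/-- `w` is the last point of the run of consecutive points of `U` starting at `u`. -/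
lemma exists_forward_boundary (hU : ∃ y, y ∉ U) {u : Fin n} (hu : u ∈ U) :
    ∃ w ∈ U, w + 1 ∉ U ∧ (w - 1 ∉ U → w = u) := by
  classical
  have hex : ∃ t : ℕ, u + t + 1 ∉ U := by
    obtain ⟨y, hy⟩ := hU
    exact ⟨(y - u - 1).val, by rwa [Fin.cast_val_eq_self, show u + (y - u - 1) + 1 = y by ring]⟩
  set t := Nat.find hex
  have hrun : ∀ j ≤ t, u + j ∈ U := by
    rintro (_ | j) hj
    · simpa using hu
    · have := not_not.mp (Nat.find_min hex (Nat.lt_of_succ_le hj))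
      rwa [Nat.cast_succ, ← add_assoc]
  refine ⟨u + t, hrun t le_rfl, Nat.find_spec hex, fun h => ?_⟩
  obtain _ | s := t
  · simp
  · refine absurd (hrun s (Nat.le_succ s)) ?_
    rwa [Nat.cast_succ, ← add_assoc, add_sub_cancel_right] at h

lemma subsingleton_of_boundary_subsingleton (hU : ∃ y, y ∉ U)
    (h : {v ∈ U | v + 1 ∉ U ∨ v - 1 ∉ U}.Subsingleton) : U.Subsingleton := by
  intro u₁ hu₁ u₂ hu₂
  -- the last point `y` of a run of the complement gives the first point `y + 1` of a run of `U`
  obtain ⟨y₀, hy₀⟩ := hU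
  obtain ⟨y, hy, hy₁, -⟩ :=
    exists_forward_boundary (U := Uᶜ) ⟨u₁, not_not.mpr hu₁⟩ hy₀
  have hx : y + 1 ∈ {v ∈ U | v + 1 ∉ U ∨ v - 1 ∉ U} :=
    ⟨not_not.mp hy₁, Or.inr (by rwa [add_sub_cancel_right])⟩
  have key : ∀ u ∈ U, u = y + 1 := fun u hu => by
    obtain ⟨w, hwU, hw₁, hwu⟩ := exists_forward_boundary ⟨y₀, hy₀⟩ hu
    have hwx : w = y + 1 := h ⟨hwU, Or.inl hw₁⟩ hx
    exact (hwu (by rwa [hwx, add_sub_cancel_right])).symm.trans hwx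
  rw [key u₁ hu₁, key u₂ hu₂]

end Fin

namespace SimpleGraph

section EdgeLocating

variable {V : Type*} {G : SimpleGraph V} {k : ℕ} {c : Sym2 V → Fin k} {u v w : V} {e : Sym2 V}
  {i : Fin k}

@[simp]
lemma edgeDist_mk (a b : V) : edgeDist G v s(a, b) = min (G.dist v a) (G.dist v b) := rfl

lemma edgeDist_le_dist (hw : w ∈ e) : edgeDist G v e ≤ G.dist v w := by
  induction e using Sym2.ind with
  | _ a b => rcases Sym2.mem_iff.mp hw with rfl | rfl <;> simp

lemma Connected.edgeDist_eq_zero_iff (hG : G.Connected) : edgeDist G v e = 0 ↔ v ∈ e := by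
  induction e using Sym2.ind with
  | _ a b =>
    rw [edgeDist_mk, Nat.min_eq_zero_iff, hG.dist_eq_zero_iff, hG.dist_eq_zero_iff, Sym2.mem_iff]

lemma classDist_le_edgeDist (he : e ∈ G.edgeSet) (hce : c e = i) :
    classDist G c v i ≤ edgeDist G v e :=
  iInf₂_le e ⟨he, hce⟩

lemma classDist_eq_top (h : ∀ e ∈ G.edgeSet, c e ≠ i) : classDist G c v i = ⊤ := by
  simp only [classDist, iInf_eq_top]
  exact fun e ⟨he, hce⟩ => absurd hce (h e he)

lemma classDist_eq_edgeDist {e₀ : Sym2 V} (h : ∀ e, e ∈ G.edgeSet ∧ c e = i ↔ e = e₀) :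
    classDist G c v i = edgeDist G v e₀ :=
  le_antisymm (iInf₂_le e₀ ((h e₀).mpr rfl)) (le_iInf₂ fun e he => by rw [(h e).mp he])

lemma Connected.classDist_eq_zero_iff (hG : G.Connected) :
    classDist G c v i = 0 ↔ i ∈ c '' G.incidenceSet v := by
  refine ⟨fun h => by_contra fun hv => ?_, ?_⟩
  · have : 1 ≤ classDist G c v i := le_iInf₂ fun e ⟨he, hce⟩ => by
      have hve : v ∉ e := fun hve => hv ⟨e, ⟨he, hve⟩, hce⟩
      exact_mod_cast Nat.one_le_iff_ne_zero.mpr (hG.edgeDist_eq_zero_iff.not.mpr hve)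
    simp [h] at this
  · rintro ⟨e, ⟨he, hve⟩, rfl⟩
    refine nonpos_iff_eq_zero.mp ((classDist_le_edgeDist he rfl).trans ?_)
    simp [hG.edgeDist_eq_zero_iff.mpr hve]

lemma classDist_le_one (hvw : G.Adj v w) (hw : i ∈ c '' G.incidenceSet w) :
    classDist G c v i ≤ 1 := by
  obtain ⟨e, ⟨he, hwe⟩, rfl⟩ := hw
  calc classDist G c v (c e) ≤ edgeDist G v e := classDist_le_edgeDist he rfl
    _ ≤ G.dist v w := by exact_mod_cast edgeDist_le_dist hwe
    _ = 1 := by simp [dist_eq_one_iff_adj.mpr hvw]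

lemma Connected.classDist_eq_one (hG : G.Connected) (hv : i ∉ c '' G.incidenceSet v)
    (hvw : G.Adj v w) (hw : i ∈ c '' G.incidenceSet w) : classDist G c v i = 1 :=
  le_antisymm (classDist_le_one hvw hw)
    (Order.one_le_iff_ne_zero.mpr (hG.classDist_eq_zero_iff.not.mpr hv))

lemma IsEdgeLocatingColoring.castLE {m : ℕ} (hc : IsEdgeLocatingColoring G c) (h : k ≤ m) :
    IsEdgeLocatingColoring G (fun e => Fin.castLE h (c e)) := by
  refine ⟨fun e he f hf hef hx hcc => hc.1 e he f hf hef hx (Fin.castLE_injective h hcc),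
    fun u v huv => ?_⟩
  obtain ⟨i, hi⟩ := hc.2 u v huv
  refine ⟨Fin.castLE h i, ?_⟩
  simpa only [classDist, (Fin.castLE_injective h).eq_iff] using hi

lemma IsEdgeLocatingColoring.classDist_ne (hc : IsEdgeLocatingColoring G c) (hG : G.Connected)
    (huv : u ≠ v) (hu : ∀ j ≠ i, j ∈ c '' G.incidenceSet u)
    (hv : ∀ j ≠ i, j ∈ c '' G.incidenceSet v) : classDist G c u i ≠ classDist G c v i := by
  obtain ⟨j, hj⟩ := hc.2 u v huv
  obtain rfl | hji := eq_or_ne j i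
  · exact hj
  · rw [hG.classDist_eq_zero_iff.mpr (hu j hji), hG.classDist_eq_zero_iff.mpr (hv j hji)] at hj
    exact absurd rfl hj

lemma edgeLocatingChromaticNumber_eq_succ
    (hk : ∃ c : Sym2 V → Fin (k + 1), IsEdgeLocatingColoring G c)
    (h : ∀ c : Sym2 V → Fin k, ¬IsEdgeLocatingColoring G c) :
    edgeLocatingChromaticNumber G = k + 1 := by
  refine le_antisymm (Nat.sInf_le hk) (le_csInf ⟨k + 1, hk⟩ ?_)
  rintro m ⟨c, hc⟩
  by_contra! hm
  exact h _ (hc.castLE (Nat.le_of_lt_succ hm))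

end EdgeLocating

section Lipschitz

variable {V : Type*} {G : SimpleGraph V} {f : V → ℕ}

lemma Walk.le_add_length (hf : ∀ v w, G.Adj v w → f w ≤ f v + 1) {u v : V} (p : G.Walk u v) :
    f v ≤ f u + p.length := by
  induction p with
  | nil => simp
  | cons h _ ih => grind [Walk.length_cons]

lemma Connected.le_add_dist (hG : G.Connected) (hf : ∀ v w, G.Adj v w → f w ≤ f v + 1)
    (u v : V) : f v ≤ f u + G.dist u v := by
  obtain ⟨p, hp⟩ := hG.exists_walk_length_eq_dist u v
  exact hp ▸ p.le_add_length hf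

end Lipschitz

variable {n : ℕ}

lemma cycleGraph_adj_add_one (v : Fin (n + 2)) : (cycleGraph (n + 2)).Adj v (v + 1) :=
  cycleGraph_adj.mpr (Or.inr (add_sub_cancel_left v 1))

lemma cycleGraph_sub_one_adj (v : Fin (n + 2)) : (cycleGraph (n + 2)).Adj (v - 1) v :=
  cycleGraph_adj.mpr (Or.inr (sub_sub_cancel v 1))

lemma cycleGraph_adj_iff {v w : Fin (n + 2)} :
    (cycleGraph (n + 2)).Adj v w ↔ w = v - 1 ∨ w = v + 1 := by
  rw [← mem_neighborSet, cycleGraph_neighborSet]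
  rfl

lemma cycleGraph_dist_add_le (u : Fin (n + 2)) (t : ℕ) :
    (cycleGraph (n + 2)).dist u (u + t) ≤ t := by
  induction t with
  | zero => simp
  | succ t ih =>
    rw [Nat.cast_succ, ← add_assoc]
    calc (cycleGraph (n + 2)).dist u (u + t + 1)
        ≤ (cycleGraph (n + 2)).dist u (u + t) + (cycleGraph (n + 2)).dist (u + t) (u + t + 1) :=
          cycleGraph_connected.dist_triangle
      _ ≤ t + 1 := by rw [dist_eq_one_iff_adj.mpr (cycleGraph_adj_add_one _)]; omega

lemma cycleGraph_dist_le_val_sub (u v : Fin (n + 2)) :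
    (cycleGraph (n + 2)).dist u v ≤ (v - u).val := by
  simpa using cycleGraph_dist_add_le u (v - u).val

theorem cycleGraph_dist (u v : Fin (n + 2)) :
    (cycleGraph (n + 2)).dist u v = min (Nat.dist u v) (n + 2 - Nat.dist u v) := by
  apply le_antisymm
  · have h₁ := cycleGraph_dist_le_val_sub u v
    have h₂ := cycleGraph_dist_le_val_sub v u
    rw [dist_comm] at h₂
    rcases lt_trichotomy u v with huv | rfl | huv
    · rw [Fin.coe_sub_iff_le.mpr huv.le] at h₁
      rw [Fin.coe_sub_iff_lt.mpr huv] at h₂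
      simp only [Nat.dist, Fin.lt_def] at *
      omega
    · simp
    · rw [Fin.coe_sub_iff_le.mpr huv.le] at h₂
      rw [Fin.coe_sub_iff_lt.mpr huv] at h₁
      simp only [Nat.dist, Fin.lt_def] at *
      omega
  · have hf : ∀ x y : Fin (n + 2), (cycleGraph (n + 2)).Adj x y →
        min (Nat.dist u y) (n + 2 - Nat.dist u y) ≤
          min (Nat.dist u x) (n + 2 - Nat.dist u x) + 1 := by
      intro x y hxy
      have hx := x.isLt
      rcases cycleGraph_adj_iff.mp hxy with rfl | rfl
      · rw [Fin.coe_sub_one]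
        split_ifs with h <;> simp only [Nat.dist, Fin.ext_iff, Fin.val_zero] at h ⊢ <;> omega
      · rw [Fin.val_add_one]
        split_ifs with h <;> simp only [Nat.dist, Fin.ext_iff, Fin.val_last] at h ⊢ <;> omega
    simpa using cycleGraph_connected.le_add_dist hf u v

lemma cycleGraph_incidenceSet (v : Fin (n + 2)) :
    (cycleGraph (n + 2)).incidenceSet v = {s(v, v + 1), s(v - 1, v)} := by
  ext e
  refine ⟨fun he => ?_, ?_⟩
  · induction e using Sym2.ind with
    | _ a b =>
      obtain ⟨hab, rfl | rfl⟩ := (mk'_mem_incidenceSet_iff _).mp he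
      · rcases cycleGraph_adj_iff.mp hab with rfl | rfl
        · exact Or.inr Sym2.eq_swap
        · exact Or.inl rfl
      · rcases cycleGraph_adj_iff.mp hab.symm with rfl | rfl
        · exact Or.inr rfl
        · exact Or.inl Sym2.eq_swap
  · rintro (rfl | rfl)
    · exact (mem_incidenceSet _ _ _).mpr (cycleGraph_adj_add_one v)
    · exact (mk'_mem_incidenceSet_right_iff _).mpr (cycleGraph_sub_one_adj v)

lemma cycleGraph_mem_edgeSet {e : Sym2 (Fin (n + 2))} :
    e ∈ (cycleGraph (n + 2)).edgeSet ↔ ∃ w, e = s(w, w + 1) := by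
  refine ⟨fun he => ?_, fun ⟨w, hw⟩ => hw ▸ cycleGraph_adj_add_one w⟩
  induction e using Sym2.ind with
  | _ a b =>
    have : s(a, b) ∈ (cycleGraph (n + 2)).incidenceSet a := ⟨he, Sym2.mem_mk_left a b⟩
    rcases (cycleGraph_incidenceSet a ▸ this : _) with h | h
    · exact ⟨a, h⟩
    · exact ⟨a - 1, by rw [h, sub_add_cancel]⟩

lemma image_cycleGraph_incidenceSet {α : Type*} (c : Sym2 (Fin (n + 2)) → α)
    (v : Fin (n + 2)) :
    c '' (cycleGraph (n + 2)).incidenceSet v = {c s(v, v + 1), c s(v - 1, v)} := by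
  rw [cycleGraph_incidenceSet, Set.image_pair]

-- `Classical.epsilon` recovers `w` from the edge `s(w, w + 1)`; non-edges get a junk color.
noncomputable def cycleColoring {α : Type*} (f : Fin (n + 3) → α) (e : Sym2 (Fin (n + 3))) :
    α :=
  f (Classical.epsilon fun w => e = s(w, w + 1))

section cycleColoring

variable {k : ℕ} {f : Fin (n + 3) → Fin k}

@[simp]
lemma cycleColoring_mk (w : Fin (n + 3)) : cycleColoring f s(w, w + 1) = f w :=
  congrArg f (Fin.sym2_self_add_one_injective
    (Classical.epsilon_spec (p := fun x => s(w, w + 1) = s(x, x + 1)) ⟨w, rfl⟩).symm)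

lemma cycleColoring_mk_sub_one (w : Fin (n + 3)) : cycleColoring f s(w - 1, w) = f (w - 1) := by
  nth_rw 2 [← sub_add_cancel w 1]
  exact cycleColoring_mk (w - 1)

lemma image_cycleColoring_incidenceSet (v : Fin (n + 3)) :
    cycleColoring f '' (cycleGraph (n + 3)).incidenceSet v = {f v, f (v - 1)} := by
  rw [image_cycleGraph_incidenceSet, cycleColoring_mk, cycleColoring_mk_sub_one]

lemma cycleColoring_isProper (hf : ∀ w, f w ≠ f (w + 1)) :
    ∀ e ∈ (cycleGraph (n + 3)).edgeSet, ∀ e' ∈ (cycleGraph (n + 3)).edgeSet, e ≠ e' →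
      (∃ x, x ∈ e ∧ x ∈ e') → cycleColoring f e ≠ cycleColoring f e' := by
  rintro e he e' he' hne ⟨x, hxe, hxe'⟩
  have hx : f (x - 1) ≠ f x := by simpa only [sub_add_cancel] using hf (x - 1)
  have h : e ∈ (cycleGraph (n + 3)).incidenceSet x := ⟨he, hxe⟩
  have h' : e' ∈ (cycleGraph (n + 3)).incidenceSet x := ⟨he', hxe'⟩
  rw [cycleGraph_incidenceSet] at h h'
  rcases h with rfl | rfl <;> rcases h' with rfl | rfl <;>
    simp only [cycleColoring_mk, cycleColoring_mk_sub_one, ne_eq] <;> tauto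

lemma cycleColoring_classDist {i : Fin k} {w₀ : Fin (n + 3)} (h : ∀ w, f w = i ↔ w = w₀)
    (v : Fin (n + 3)) :
    classDist (cycleGraph (n + 3)) (cycleColoring f) v i =
      edgeDist (cycleGraph (n + 3)) v s(w₀, w₀ + 1) := by
  refine classDist_eq_edgeDist fun e => ⟨fun ⟨he, hce⟩ => ?_, ?_⟩
  · obtain ⟨w, rfl⟩ := cycleGraph_mem_edgeSet.mp he
    rw [(h w).mp (by simpa using hce)]
  · rintro rfl
    exact ⟨cycleGraph_adj_add_one w₀, by simp [(h w₀).mpr rfl]⟩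

end cycleColoring

lemma IsEdgeLocatingColoring.cycleGraph_apply_ne {k : ℕ} {c : Sym2 (Fin (n + 3)) → Fin k}
    (hc : IsEdgeLocatingColoring (cycleGraph (n + 3)) c) (v : Fin (n + 3)) :
    c s(v, v + 1) ≠ c s(v - 1, v) := by
  refine hc.1 _ (cycleGraph_adj_add_one v) _ (cycleGraph_sub_one_adj v)
    (fun h => ?_) ⟨v, Sym2.mem_mk_left _ _, Sym2.mem_mk_right _ _⟩
  rcases Sym2.eq_iff.mp h with ⟨h₁, -⟩ | ⟨-, h₂⟩
  · have : (1 : Fin (n + 3)) = 0 := by linear_combination h₁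
    simp at this
  · have : (2 : Fin (n + 3)) = 0 := by linear_combination h₂
    simp [Fin.ext_iff, Nat.mod_eq_of_lt (show 2 < n + 3 by omega)] at this

lemma cycleGraph_three_not_isEdgeLocatingColoring (c : Sym2 (Fin 3) → Fin 2) :
    ¬IsEdgeLocatingColoring (cycleGraph 3) c := fun hc => by
  have h₀ : c s(0, 1) ≠ c s(2, 0) := hc.cycleGraph_apply_ne (n := 0) 0
  have h₁ : c s(1, 2) ≠ c s(0, 1) := hc.cycleGraph_apply_ne (n := 0) 1
  have h₂ : c s(2, 0) ≠ c s(1, 2) := hc.cycleGraph_apply_ne (n := 0) 2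
  revert h₀ h₁ h₂
  generalize c s(0, 1) = a, c s(1, 2) = b, c s(2, 0) = d
  revert a b d
  decide

lemma cycleGraph_three_isEdgeLocatingColoring :
    IsEdgeLocatingColoring (cycleGraph 3) (cycleColoring (n := 0) id) := by
  refine ⟨cycleColoring_isProper (by decide), fun u v huv => ⟨u + 1, ?_⟩⟩
  have key : ∀ u v : Fin 3, u ≠ v →
      ¬(u + 1 = u ∨ u + 1 = u - 1) ∧ (u + 1 = v ∨ u + 1 = v - 1) := by
    decide
  obtain ⟨hu, hv⟩ := key u v huv
  have hu' : u + 1 ∉ cycleColoring id '' (cycleGraph 3).incidenceSet u := by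
    simpa [image_cycleColoring_incidenceSet (n := 0)] using hu
  have hv' : u + 1 ∈ cycleColoring id '' (cycleGraph 3).incidenceSet v := by
    simpa [image_cycleColoring_incidenceSet (n := 0)] using hv
  have hG : (cycleGraph 3).Connected := cycleGraph_connected
  rw [hG.classDist_eq_zero_iff.mpr hv']
  exact hG.classDist_eq_zero_iff.not.mpr hu'

section ThreeColors

variable {c : Sym2 (Fin (n + 3)) → Fin 3}

lemma IsEdgeLocatingColoring.cycleGraph_mem_image_incidenceSet_of_notMem
    (hc : IsEdgeLocatingColoring (cycleGraph (n + 3)) c) {v : Fin (n + 3)} {i j : Fin 3}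
    (hi : i ∉ c '' (cycleGraph (n + 3)).incidenceSet v) (hj : j ≠ i) :
    j ∈ c '' (cycleGraph (n + 3)).incidenceSet v := by
  have key : ∀ a b i j : Fin 3,
      a ≠ b → i ≠ a → i ≠ b → j ≠ i → j = a ∨ j = b := by
    decide
  simp only [image_cycleGraph_incidenceSet, Set.mem_insert_iff, Set.mem_singleton_iff,
    not_or] at hi ⊢
  exact key _ _ _ _ (hc.cycleGraph_apply_ne v) hi.1 hi.2 hj

lemma IsEdgeLocatingColoring.cycleGraph_subsingleton_setOf_notMem
    (hc : IsEdgeLocatingColoring (cycleGraph (n + 3)) c) (i : Fin 3) :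
    {v | i ∉ c '' (cycleGraph (n + 3)).incidenceSet v}.Subsingleton := by
  have hG : (cycleGraph (n + 3)).Connected := cycleGraph_connected
  set U := {v | i ∉ c '' (cycleGraph (n + 3)).incidenceSet v}
  have hsep : ∀ v ∈ U, ∀ w ∈ U,
      classDist (cycleGraph (n + 3)) c v i = classDist (cycleGraph (n + 3)) c w i → v = w :=
    fun v hv w hw h => by_contra fun hvw =>
      hc.classDist_ne hG hvw (fun _ => hc.cycleGraph_mem_image_incidenceSet_of_notMem hv)
        (fun _ => hc.cycleGraph_mem_image_incidenceSet_of_notMem hw) h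
  by_cases hi : ∃ e ∈ (cycleGraph (n + 3)).edgeSet, c e = i
  · obtain ⟨e, he, hce⟩ := hi
    obtain ⟨w, rfl⟩ := cycleGraph_mem_edgeSet.mp he
    have hw : w ∉ U := fun hw => hw ⟨_, ⟨he, Sym2.mem_mk_left _ _⟩, hce⟩
    have hone : ∀ v ∈ U, v + 1 ∉ U ∨ v - 1 ∉ U →
        classDist (cycleGraph (n + 3)) c v i = 1 := by
      rintro v hv (hv' | hv') <;> refine hG.classDist_eq_one hv ?_ (not_not.mp hv')
      exacts [cycleGraph_adj_add_one v, (cycleGraph_sub_one_adj v).symm]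
    refine Fin.subsingleton_of_boundary_subsingleton ⟨w, hw⟩ ?_
    rintro v ⟨hv, hv'⟩ u ⟨hu, hu'⟩
    exact hsep v hv u hu (by rw [hone v hv hv', hone u hu hu'])
  · push Not at hi
    exact fun v hv w hw => hsep v hv w hw (by rw [classDist_eq_top hi, classDist_eq_top hi])

theorem IsEdgeLocatingColoring.cycleGraph_card_le_three
    (hc : IsEdgeLocatingColoring (cycleGraph (n + 3)) c) : n + 3 ≤ 3 := by
  have hmiss : ∀ v : Fin (n + 3), ∃ i, i ∉ c '' (cycleGraph (n + 3)).incidenceSet v := by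
    have key : ∀ a b : Fin 3, ∃ i, ¬(i = a ∨ i = b) := by decide
    simpa only [image_cycleGraph_incidenceSet, Set.mem_insert_iff, Set.mem_singleton_iff]
      using fun v => key _ _
  choose m hm using hmiss
  exact Fin.le_of_injective m fun v w h =>
    hc.cycleGraph_subsingleton_setOf_notMem (m w) (h ▸ hm v) (hm w)

end ThreeColors

def fourColoring (n : ℕ) (w : Fin (n + 3)) : Fin 4 :=
  if w = Fin.last _ then 3 else if w = 0 then 2 else if w.val % 2 = 0 then 1 else 0

lemma fourColoring_ne_add_one (w : Fin (n + 3)) : fourColoring n w ≠ fourColoring n (w + 1) := by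
  have hw := w.isLt
  simp only [fourColoring, Fin.ext_iff, Fin.val_last, Fin.val_zero, Fin.val_add_one]
  split_ifs <;> first | decide | omega | contradiction

lemma fourColoring_eq_two_iff (w : Fin (n + 3)) : fourColoring n w = 2 ↔ w = 0 := by
  unfold fourColoring
  split_ifs <;> simp_all

lemma fourColoring_eq_three_iff (w : Fin (n + 3)) : fourColoring n w = 3 ↔ w = Fin.last _ := by
  unfold fourColoring
  split_ifs <;> simp_all

lemma cycleGraph_edgeDist_zero_one (v : Fin (n + 3)) :
    edgeDist (cycleGraph (n + 3)) v s(0, 1) = min (v.val - 1) (n + 3 - v.val) := by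
  have hv := v.isLt
  simp only [edgeDist_mk, cycleGraph_dist, Fin.val_zero, Fin.val_one, Nat.dist]
  omega

lemma cycleGraph_edgeDist_last_zero (v : Fin (n + 3)) :
    edgeDist (cycleGraph (n + 3)) v s(Fin.last _, 0) = min v.val (n + 2 - v.val) := by
  have hv := v.isLt
  simp only [edgeDist_mk, cycleGraph_dist, Fin.val_zero, Fin.val_last, Nat.dist]
  omega

theorem cycleGraph_isEdgeLocatingColoring_fourColoring :
    IsEdgeLocatingColoring (cycleGraph (n + 3)) (cycleColoring (fourColoring n)) := by
  refine ⟨cycleColoring_isProper fourColoring_ne_add_one, fun u v huv => ?_⟩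
  by_contra! h
  have h₂ := h 2
  have h₃ := h 3
  simp only [cycleColoring_classDist fourColoring_eq_two_iff,
    cycleColoring_classDist fourColoring_eq_three_iff, zero_add, Fin.last_add_one,
    cycleGraph_edgeDist_zero_one, cycleGraph_edgeDist_last_zero, Nat.cast_inj] at h₂ h₃
  exact huv (Fin.ext (by omega))

end SimpleGraph

/-- For every integer `n ≥ 3`, the edge-locating chromatic number of the cycle `C_n` equals
`3` if `n = 3` and `4` if `n ≥ 4`. -/
theorem stmt_1 (n : ℕ) (hn : 3 ≤ n) :
    edgeLocatingChromaticNumber (SimpleGraph.cycleGraph n) = if n = 3 then 3 else 4 := by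
  obtain ⟨m, rfl⟩ : ∃ m, n = m + 3 := ⟨n - 3, by omega⟩
  rcases Nat.eq_zero_or_pos m with rfl | hm
  · exact edgeLocatingChromaticNumber_eq_succ ⟨_, cycleGraph_three_isEdgeLocatingColoring⟩
      cycleGraph_three_not_isEdgeLocatingColoring
  · rw [if_neg (by omega)]
    refine edgeLocatingChromaticNumber_eq_succ
      ⟨_, cycleGraph_isEdgeLocatingColoring_fourColoring⟩ fun c hc => ?_
    have := hc.cycleGraph_card_le_three
    omega
end

section
/- For distinct integers n, m ≥ 2, the edge-locating chromatic number of the complete bipartite graph K_{n,m} equals max{n, m} + 1. -/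
open SimpleGraph

-- basic lemmas

lemma edgeDist_eq_zero {V : Type*} {G : SimpleGraph V} {v : V} {e : Sym2 V} (hv : v ∈ e) :
    edgeDist G v e = 0 := by
  induction e using Sym2.ind with
  | _ x y =>
    rcases Sym2.mem_iff.mp hv with rfl | rfl
    · simp [edgeDist]
    · simp [edgeDist]

lemma classDist_eq_zero {V : Type*} {G : SimpleGraph V} {k : ℕ} {c : Sym2 V → Fin k} {v : V}
    {i : Fin k} {e : Sym2 V} (he : e ∈ G.edgeSet) (hc : c e = i) (hv : v ∈ e) :
    classDist G c v i = 0 := by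
  refine le_antisymm ?_ zero_le
  have := iInf₂_le (f := fun (e : Sym2 V) (_ : e ∈ {e | e ∈ G.edgeSet ∧ c e = i}) =>
    (edgeDist G v e : ℕ∞)) e ⟨he, hc⟩
  simpa [classDist, edgeDist_eq_zero hv] using this

lemma classDist_ne_zero {V : Type*} {G : SimpleGraph V} {k : ℕ} {c : Sym2 V → Fin k} {v : V}
    {i : Fin k} (h : ∀ e, e ∈ G.edgeSet → c e = i → 1 ≤ edgeDist G v e) :
    classDist G c v i ≠ 0 := by
  have h1 : (1 : ℕ∞) ≤ classDist G c v i := by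
    refine le_iInf₂ fun e he => ?_
    exact_mod_cast h e he.1 he.2
  intro h0
  rw [h0] at h1
  simp at h1
open SimpleGraph

open Fin.NatCast

lemma cb_adj {n m : ℕ} (a : Fin n) (b : Fin m) :
    (completeBipartiteGraph (Fin n) (Fin m)).Adj (.inl a) (.inr b) := by simp

lemma cb_reachable {n m : ℕ} (hn : 0 < n) (hm : 0 < m) (x y : Fin n ⊕ Fin m) :
    (completeBipartiteGraph (Fin n) (Fin m)).Reachable x y := by
  cases x with
  | inl a => cases y with
    | inl a' => exact ((cb_adj a ⟨0, hm⟩).reachable).trans ((cb_adj a' ⟨0, hm⟩).symm.reachable)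
    | inr b => exact (cb_adj a b).reachable
  | inr b => cases y with
    | inl a => exact (cb_adj a b).symm.reachable
    | inr b' => exact ((cb_adj ⟨0, hn⟩ b).symm.reachable).trans ((cb_adj ⟨0, hn⟩ b').reachable)

lemma cb_edge_form {n m : ℕ} {e : Sym2 (Fin n ⊕ Fin m)}
    (he : e ∈ (completeBipartiteGraph (Fin n) (Fin m)).edgeSet) :
    ∃ a b, e = s(Sum.inl a, Sum.inr b) := by
  induction e using Sym2.ind with
  | _ x y =>
    rw [SimpleGraph.mem_edgeSet] at he
    cases x with
    | inl a => cases y with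
      | inl a' => simp at he
      | inr b => exact ⟨a, b, rfl⟩
    | inr b => cases y with
      | inl a => exact ⟨a, b, Sym2.eq_swap⟩
      | inr b' => simp at he

def bcolFun (n m : ℕ) : (Fin n ⊕ Fin m) → (Fin n ⊕ Fin m) → Fin (max n m + 1)
  | .inl i, .inr j => (((i : ℕ) + (j : ℕ) : ℕ) : Fin (max n m + 1))
  | .inr j, .inl i => (((i : ℕ) + (j : ℕ) : ℕ) : Fin (max n m + 1))
  | _, _ => 0

def bcol (n m : ℕ) : Sym2 (Fin n ⊕ Fin m) → Fin (max n m + 1) :=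
  Sym2.lift ⟨bcolFun n m, fun x y => by cases x <;> cases y <;> rfl⟩

lemma bcol_mk {n m : ℕ} (a : Fin n) (b : Fin m) :
    bcol n m s(.inl a, .inr b) = (((a : ℕ) + (b : ℕ) : ℕ) : Fin (max n m + 1)) := rfl

lemma bcol_proper {n m : ℕ} :
    ∀ e ∈ (completeBipartiteGraph (Fin n) (Fin m)).edgeSet,
    ∀ f ∈ (completeBipartiteGraph (Fin n) (Fin m)).edgeSet,
      e ≠ f → (∃ x, x ∈ e ∧ x ∈ f) → bcol n m e ≠ bcol n m f := by
  intro e he f hf hef ⟨x, hxe, hxf⟩ hcol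
  obtain ⟨a, b, rfl⟩ := cb_edge_form he
  obtain ⟨a', b', rfl⟩ := cb_edge_form hf
  rw [bcol_mk, bcol_mk] at hcol
  have hmod : ((a : ℕ) + b) ≡ ((a' : ℕ) + b') [MOD (max n m + 1)] := by
    have := congrArg Fin.val hcol
    rw [Fin.val_natCast, Fin.val_natCast] at this
    exact this
  cases x with
  | inl c =>
    have ha : c = a := by simpa using hxe
    have ha' : c = a' := by simpa using hxf
    subst ha; subst ha'
    have : (b : ℕ) ≡ (b' : ℕ) [MOD (max n m + 1)] := hmod.add_left_cancel' _
    have hb : (b : ℕ) = (b' : ℕ) := this.eq_of_lt_of_lt (by omega) (by omega)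
    exact hef (by rw [Fin.ext hb])
  | inr c =>
    have hb : c = b := by simpa using hxe
    have hb' : c = b' := by simpa using hxf
    subst hb; subst hb'
    have hmod2 : ((c : ℕ) + a) ≡ ((c : ℕ) + a') [MOD (max n m + 1)] := by
      rwa [Nat.add_comm (c : ℕ) (a : ℕ), Nat.add_comm (c : ℕ) (a' : ℕ)]
    have : (a : ℕ) ≡ (a' : ℕ) [MOD (max n m + 1)] := hmod2.add_left_cancel' _
    have ha : (a : ℕ) = (a' : ℕ) := this.eq_of_lt_of_lt (by omega) (by omega)
    exact hef (by rw [Fin.ext ha])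

lemma cyc_main (k L1 L2 a b : ℕ) (hL1 : 0 < L1) (hL1k : L1 < k) (hL2 : 0 < L2) (hL2k : L2 < k)
    (ha : a < k) (hb : b < k)
    (h : ∀ t, (∃ j, j < L1 ∧ (a + j) % k = t) ↔ (∃ j, j < L2 ∧ (b + j) % k = t)) :
    a = b ∧ L1 = L2 := by
  have hab : a = b := by
    obtain ⟨j0, hj0, hj0e⟩ := (h b).mpr ⟨0, hL2, by simpa using Nat.mod_eq_of_lt hb⟩
    rcases Nat.eq_zero_or_pos j0 with h0 | h0
    · subst h0; simpa [Nat.mod_eq_of_lt ha] using hj0e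
    · exfalso
      have hmod : a + j0 ≡ b [MOD k] := by
        unfold Nat.ModEq; rw [hj0e, Nat.mod_eq_of_lt hb]
      have key : (a + (j0 - 1)) % k = (b + (k - 1)) % k := by
        have h3 : a + (j0 - 1) + k ≡ b + (k - 1) [MOD k] := by
          rw [show a + (j0 - 1) + k = a + j0 + (k - 1) by omega]
          exact hmod.add_right _
        have h4 : a + (j0 - 1) ≡ a + (j0 - 1) + k [MOD k] := (Nat.add_mod_right _ k).symm
        exact h4.trans h3
      obtain ⟨j', hj', he'⟩ := (h _).mp ⟨j0 - 1, by omega, key⟩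
      have : j' ≡ k - 1 [MOD k] := Nat.ModEq.add_left_cancel' b he'
      have := this.eq_of_lt_of_lt (by omega) (by omega)
      omega
  subst hab
  refine ⟨rfl, ?_⟩
  by_contra hne
  rcases Nat.lt_or_ge L1 L2 with hlt | hge
  · obtain ⟨j, hj, he⟩ := (h ((a + L1) % k)).mpr ⟨L1, hlt, rfl⟩
    have : j ≡ L1 [MOD k] := Nat.ModEq.add_left_cancel' a he
    have := this.eq_of_lt_of_lt (by omega) (by omega)
    omega
  · have hlt : L2 < L1 := by omega
    obtain ⟨j, hj, he⟩ := (h ((a + L2) % k)).mp ⟨L2, hlt, rfl⟩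
    have : j ≡ L2 [MOD k] := Nat.ModEq.add_left_cancel' a he
    have := this.eq_of_lt_of_lt (by omega) (by omega)
    omega

lemma present_inl {n m : ℕ} {a : Fin n} {t : Fin (max n m + 1)} :
    (∃ e ∈ (completeBipartiteGraph (Fin n) (Fin m)).edgeSet,
        bcol n m e = t ∧ Sum.inl a ∈ e) ↔
      ∃ j, j < m ∧ ((a : ℕ) + j) % (max n m + 1) = (t : ℕ) := by
  constructor
  · rintro ⟨e, he, hc, hmem⟩
    obtain ⟨a', b, rfl⟩ := cb_edge_form he
    have haa : a = a' := by simpa using hmem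
    subst haa
    refine ⟨b, b.isLt, ?_⟩
    rw [bcol_mk] at hc
    have := congrArg Fin.val hc
    rwa [Fin.val_natCast] at this
  · rintro ⟨j, hj, hjt⟩
    refine ⟨s(.inl a, .inr ⟨j, hj⟩), (SimpleGraph.mem_edgeSet _).mpr (cb_adj a ⟨j, hj⟩), ?_, by simp⟩
    rw [bcol_mk]
    apply Fin.ext
    rw [Fin.val_natCast]
    exact hjt

lemma present_inr {n m : ℕ} {b : Fin m} {t : Fin (max n m + 1)} :
    (∃ e ∈ (completeBipartiteGraph (Fin n) (Fin m)).edgeSet,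
        bcol n m e = t ∧ Sum.inr b ∈ e) ↔
      ∃ i, i < n ∧ ((b : ℕ) + i) % (max n m + 1) = (t : ℕ) := by
  constructor
  · rintro ⟨e, he, hc, hmem⟩
    obtain ⟨a, b', rfl⟩ := cb_edge_form he
    have hbb : b = b' := by simpa using hmem
    subst hbb
    refine ⟨a, a.isLt, ?_⟩
    rw [bcol_mk] at hc
    have := congrArg Fin.val hc
    rw [Fin.val_natCast] at this
    rwa [Nat.add_comm] at this
  · rintro ⟨i, hi, hit⟩
    refine ⟨s(.inl ⟨i, hi⟩, .inr b), (SimpleGraph.mem_edgeSet _).mpr (cb_adj ⟨i, hi⟩ b), ?_, by simp⟩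
    rw [bcol_mk]
    apply Fin.ext
    rw [Fin.val_natCast]
    rwa [Nat.add_comm]

lemma edgeDist_pos {n m : ℕ} (hn : 0 < n) (hm : 0 < m) {v : Fin n ⊕ Fin m}
    {e : Sym2 (Fin n ⊕ Fin m)} (he : e ∈ (completeBipartiteGraph (Fin n) (Fin m)).edgeSet)
    (hv : v ∉ e) : 1 ≤ edgeDist (completeBipartiteGraph (Fin n) (Fin m)) v e := by
  induction e using Sym2.ind with
  | _ x y =>
    rw [Sym2.mem_iff] at hv
    push_neg at hv
    have h1 := (cb_reachable hn hm v x).pos_dist_of_ne hv.1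
    have h2 := (cb_reachable hn hm v y).pos_dist_of_ne hv.2
    simp only [edgeDist, Sym2.lift_mk]
    omega

lemma bcol_locating (n m : ℕ) (hn : 2 ≤ n) (hm : 2 ≤ m) (hnm : n ≠ m) :
    ∀ u v : Fin n ⊕ Fin m, u ≠ v →
      ∃ i, classDist (completeBipartiteGraph (Fin n) (Fin m)) (bcol n m) u i ≠
           classDist (completeBipartiteGraph (Fin n) (Fin m)) (bcol n m) v i := by
  set G := completeBipartiteGraph (Fin n) (Fin m) with hG
  intro u v huv
  by_contra hcon
  push_neg at hcon
  have main : ∀ w w' : Fin n ⊕ Fin m,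
      (∀ i, classDist G (bcol n m) w i = classDist G (bcol n m) w' i) →
      ∀ t, (∃ e ∈ G.edgeSet, bcol n m e = t ∧ w ∈ e) →
        (∃ e ∈ G.edgeSet, bcol n m e = t ∧ w' ∈ e) := by
    rintro w w' hcd t ⟨e, he, hcc, hmem⟩
    by_contra hnp
    push_neg at hnp
    have h0 : classDist G (bcol n m) w t = 0 := classDist_eq_zero he hcc hmem
    have hne : classDist G (bcol n m) w' t ≠ 0 := by
      apply classDist_ne_zero
      intro f hf hcf
      exact edgeDist_pos (by omega) (by omega) hf (hnp f hf hcf)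
    exact hne ((hcd t) ▸ h0)
  have hpres : ∀ t : Fin (max n m + 1),
      (∃ e ∈ G.edgeSet, bcol n m e = t ∧ u ∈ e) ↔
      (∃ e ∈ G.edgeSet, bcol n m e = t ∧ v ∈ e) :=
    fun t => ⟨main u v hcon t, main v u (fun i => (hcon i).symm) t⟩
  have hKpos : 0 < max n m + 1 := Nat.succ_pos _
  have hmK : m < max n m + 1 := Nat.lt_succ_of_le (Nat.le_max_right n m)
  have hnK : n < max n m + 1 := Nat.lt_succ_of_le (Nat.le_max_left n m)
  cases u with
  | inl a =>
    cases v with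
    | inl a' =>
      have ha := a.isLt; have ha' := a'.isLt
      have H : ∀ t, (∃ j, j < m ∧ ((a : ℕ) + j) % (max n m + 1) = t) ↔
          (∃ j, j < m ∧ ((a' : ℕ) + j) % (max n m + 1) = t) := by
        intro t
        by_cases ht : t < max n m + 1
        · have h := hpres ⟨t, ht⟩
          rw [present_inl, present_inl] at h
          simpa using h
        · constructor
          · rintro ⟨j, hj, hjt⟩
            exact absurd (hjt ▸ Nat.mod_lt ((a : ℕ) + j) hKpos) ht
          · rintro ⟨j, hj, hjt⟩
            exact absurd (hjt ▸ Nat.mod_lt ((a' : ℕ) + j) hKpos) ht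
      obtain ⟨hab, -⟩ := cyc_main (max n m + 1) m m (a : ℕ) (a' : ℕ)
        (by omega) (by omega) (by omega) (by omega) (by omega) (by omega) H
      exact huv (by rw [Fin.ext hab])
    | inr b =>
      have ha := a.isLt; have hb := b.isLt
      have H : ∀ t, (∃ j, j < m ∧ ((a : ℕ) + j) % (max n m + 1) = t) ↔
          (∃ j, j < n ∧ ((b : ℕ) + j) % (max n m + 1) = t) := by
        intro t
        by_cases ht : t < max n m + 1
        · have h := hpres ⟨t, ht⟩
          rw [present_inl, present_inr] at h
          simpa using h
        · constructor
          · rintro ⟨j, hj, hjt⟩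
            exact absurd (hjt ▸ Nat.mod_lt ((a : ℕ) + j) hKpos) ht
          · rintro ⟨j, hj, hjt⟩
            exact absurd (hjt ▸ Nat.mod_lt ((b : ℕ) + j) hKpos) ht
      obtain ⟨-, hmn⟩ := cyc_main (max n m + 1) m n (a : ℕ) (b : ℕ)
        (by omega) (by omega) (by omega) (by omega) (by omega) (by omega) H
      exact hnm hmn.symm
  | inr b =>
    cases v with
    | inl a =>
      have ha := a.isLt; have hb := b.isLt
      have H : ∀ t, (∃ j, j < n ∧ ((b : ℕ) + j) % (max n m + 1) = t) ↔
          (∃ j, j < m ∧ ((a : ℕ) + j) % (max n m + 1) = t) := by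
        intro t
        by_cases ht : t < max n m + 1
        · have h := hpres ⟨t, ht⟩
          rw [present_inr, present_inl] at h
          simpa using h
        · constructor
          · rintro ⟨j, hj, hjt⟩
            exact absurd (hjt ▸ Nat.mod_lt ((b : ℕ) + j) hKpos) ht
          · rintro ⟨j, hj, hjt⟩
            exact absurd (hjt ▸ Nat.mod_lt ((a : ℕ) + j) hKpos) ht
      obtain ⟨-, hmn⟩ := cyc_main (max n m + 1) n m (b : ℕ) (a : ℕ)
        (by omega) (by omega) (by omega) (by omega) (by omega) (by omega) H
      exact hnm hmn
    | inr b' =>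
      have hb := b.isLt; have hb' := b'.isLt
      have H : ∀ t, (∃ j, j < n ∧ ((b : ℕ) + j) % (max n m + 1) = t) ↔
          (∃ j, j < n ∧ ((b' : ℕ) + j) % (max n m + 1) = t) := by
        intro t
        by_cases ht : t < max n m + 1
        · have h := hpres ⟨t, ht⟩
          rw [present_inr, present_inr] at h
          simpa using h
        · constructor
          · rintro ⟨j, hj, hjt⟩
            exact absurd (hjt ▸ Nat.mod_lt ((b : ℕ) + j) hKpos) ht
          · rintro ⟨j, hj, hjt⟩
            exact absurd (hjt ▸ Nat.mod_lt ((b' : ℕ) + j) hKpos) ht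
      obtain ⟨hbb, -⟩ := cyc_main (max n m + 1) n n (b : ℕ) (b' : ℕ)
        (by omega) (by omega) (by omega) (by omega) (by omega) (by omega) H
      exact huv (by rw [Fin.ext hbb])


lemma cb_lower (n m k : ℕ) (hn : 2 ≤ n) (hm : 2 ≤ m)
    (c : Sym2 (Fin n ⊕ Fin m) → Fin k)
    (hc : IsEdgeLocatingColoring (completeBipartiteGraph (Fin n) (Fin m)) c) :
    max n m + 1 ≤ k := by
  set G := completeBipartiteGraph (Fin n) (Fin m) with hG
  obtain ⟨hprop, hloc⟩ := hc
  have hinjL : ∀ a : Fin n, Function.Injective fun j : Fin m => c s(Sum.inl a, Sum.inr j) := by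
    intro a j j' hjj
    by_contra hne
    refine hprop s(Sum.inl a, Sum.inr j) ((SimpleGraph.mem_edgeSet _).mpr (cb_adj a j))
      s(Sum.inl a, Sum.inr j') ((SimpleGraph.mem_edgeSet _).mpr (cb_adj a j'))
      ?_ ⟨Sum.inl a, by simp, by simp⟩ hjj
    rw [Ne, Sym2.congr_right]
    exact fun h => hne (Sum.inr.inj h)
  have hinjR : ∀ b : Fin m, Function.Injective fun i : Fin n => c s(Sum.inl i, Sum.inr b) := by
    intro b i i' hii
    by_contra hne
    refine hprop s(Sum.inl i, Sum.inr b) ((SimpleGraph.mem_edgeSet _).mpr (cb_adj i b))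
      s(Sum.inl i', Sum.inr b) ((SimpleGraph.mem_edgeSet _).mpr (cb_adj i' b))
      ?_ ⟨Sum.inr b, by simp, by simp⟩ hii
    rw [Ne, Sym2.congr_left]
    exact fun h => hne (Sum.inl.inj h)
  have hmk : m ≤ k := by
    simpa using Fintype.card_le_of_injective _ (hinjL ⟨0, by omega⟩)
  have hnk : n ≤ k := by
    simpa using Fintype.card_le_of_injective _ (hinjR ⟨0, by omega⟩)
  by_contra hcon
  rcases Nat.lt_or_ge n m with hlt | hge
  · have hkm : k = m := by omega
    have hall : ∀ a : Fin n, ∀ i : Fin k, classDist G c (Sum.inl a) i = 0 := by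
      intro a i
      have hbij : Function.Bijective fun j : Fin m => c s(Sum.inl a, Sum.inr j) := by
        rw [Fintype.bijective_iff_injective_and_card]
        exact ⟨hinjL a, by simp [hkm]⟩
      obtain ⟨j, hj⟩ := hbij.2 i
      exact classDist_eq_zero ((SimpleGraph.mem_edgeSet _).mpr (cb_adj a j)) hj (by simp)
    obtain ⟨i, hi⟩ := hloc (Sum.inl ⟨0, by omega⟩) (Sum.inl ⟨1, by omega⟩) (by simp)
    exact hi (by rw [hall, hall])
  · have hkn : k = n := by omega
    have hall : ∀ b : Fin m, ∀ i : Fin k, classDist G c (Sum.inr b) i = 0 := by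
      intro b i
      have hbij : Function.Bijective fun j : Fin n => c s(Sum.inl j, Sum.inr b) := by
        rw [Fintype.bijective_iff_injective_and_card]
        exact ⟨hinjR b, by simp [hkn]⟩
      obtain ⟨j, hj⟩ := hbij.2 i
      exact classDist_eq_zero ((SimpleGraph.mem_edgeSet _).mpr (cb_adj j b)) hj (by simp)
    obtain ⟨i, hi⟩ := hloc (Sum.inr ⟨0, by omega⟩) (Sum.inr ⟨1, by omega⟩) (by simp)
    exact hi (by rw [hall, hall])


/-- For distinct integers `n, m ≥ 2`, the edge-locating chromatic number of `K_{n,m}`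
equals `max n m + 1`. -/
theorem stmt_3 (n m : ℕ) (hn : 2 ≤ n) (hm : 2 ≤ m) (hnm : n ≠ m) :
    edgeLocatingChromaticNumber (completeBipartiteGraph (Fin n) (Fin m)) = max n m + 1 := by
  have hmem : (max n m + 1) ∈ {k | ∃ c : Sym2 (Fin n ⊕ Fin m) → Fin k,
      IsEdgeLocatingColoring (completeBipartiteGraph (Fin n) (Fin m)) c} :=
    ⟨bcol n m, bcol_proper, bcol_locating n m hn hm hnm⟩
  unfold edgeLocatingChromaticNumber
  refine le_antisymm (Nat.sInf_le hmem) (le_csInf ⟨_, hmem⟩ ?_)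
  rintro k ⟨c, hc⟩
  exact cb_lower n m k hn hm c hc
end

section
/- For every integer n ≥ 2, the edge-locating chromatic number of the balanced complete bipartite graph K_{n,n} equals n + 2. -/
open SimpleGraph

/-! ### Arithmetic auxiliary results -/

def phiF (a : ℕ) : ℕ := if a = 0 then 1 else a + 2

lemma phiF_bounds {n a : ℕ} (hn : 2 ≤ n) (ha : a < n) :
    (phiF a = 1 ∨ (3 ≤ phiF a ∧ phiF a ≤ n + 1)) := by
  unfold phiF; split_ifs <;> omega

lemma phiF_inj {a a' : ℕ} (h : phiF a = phiF a') : a = a' := by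
  unfold phiF at h; split_ifs at h <;> omega

lemma mod2 {m x : ℕ} (hm : 0 < m) (h : x < 2 * m) :
    x % m = if x < m then x else x - m := by
  clear hm
  split_ifs with h1
  · exact Nat.mod_eq_of_lt h1
  · rw [Nat.mod_eq_sub_mod (by omega), Nat.mod_eq_of_lt (by omega)]

def colF (n : ℕ) (hn : 2 ≤ n) (a b : Fin n) : Fin (n + 2) :=
  ⟨(phiF a.val + b.val + 2) % (n + 2), Nat.mod_lt _ (by omega)⟩

lemma colF_val {n : ℕ} (hn : 2 ≤ n) (a b : Fin n) :
    (colF n hn a b).val =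
      if phiF a.val + b.val + 2 < n + 2 then phiF a.val + b.val + 2
      else phiF a.val + b.val + 2 - (n + 2) := by
  have hp := phiF_bounds hn a.isLt
  have hb := b.isLt
  exact mod2 (by omega) (by omega)

lemma colF_inj_right {n : ℕ} (hn : 2 ≤ n) (a b b' : Fin n)
    (h : colF n hn a b = colF n hn a b') : b = b' := by
  have hv := congrArg Fin.val h
  rw [colF_val hn, colF_val hn] at hv
  have hp := phiF_bounds hn a.isLt
  have hb := b.isLt; have hb' := b'.isLt
  apply Fin.ext
  split_ifs at hv <;> omega

lemma colF_inj_left {n : ℕ} (hn : 2 ≤ n) (a a' b : Fin n)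
    (h : colF n hn a b = colF n hn a' b) : a = a' := by
  have hv := congrArg Fin.val h
  rw [colF_val hn, colF_val hn] at hv
  have hp := phiF_bounds hn a.isLt
  have hp' := phiF_bounds hn a'.isLt
  have hb := b.isLt
  have : phiF a.val = phiF a'.val := by split_ifs at hv <;> omega
  exact Fin.ext (phiF_inj this)

lemma exists_b_iff {n : ℕ} (hn : 2 ≤ n) (a : Fin n) (i : Fin (n + 2)) :
    (∃ b : Fin n, colF n hn a b = i) ↔
      (i.val ≠ phiF a.val ∧ i.val ≠ (phiF a.val + 1) % (n + 2)) := by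
  have hp := phiF_bounds hn a.isLt
  have hi := i.isLt
  have hmod : (phiF a.val + 1) % (n + 2) =
      if phiF a.val + 1 < n + 2 then phiF a.val + 1 else phiF a.val + 1 - (n + 2) :=
    mod2 (by omega) (by omega)
  constructor
  · rintro ⟨b, rfl⟩
    have hb := b.isLt
    rw [colF_val hn, hmod]
    constructor <;> (split_ifs <;> omega)
  · rintro ⟨h1, h2⟩
    rw [hmod] at h2
    set p := phiF a.val with hpdef
    have hblt : (if p + 2 ≤ i.val then i.val - p - 2 else i.val + (n + 2) - p - 2) < n := by
      split_ifs at h2 <;> split_ifs <;> omega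
    refine ⟨⟨_, hblt⟩, Fin.ext ?_⟩
    rw [colF_val hn]
    simp only
    split_ifs at h2 <;> split_ifs <;> omega

lemma exists_a_iff {n : ℕ} (hn : 2 ≤ n) (b : Fin n) (i : Fin (n + 2)) :
    (∃ a : Fin n, colF n hn a b = i) ↔
      (i.val ≠ b.val + 2 ∧ i.val ≠ (b.val + 4) % (n + 2)) := by
  have hb := b.isLt
  have hi := i.isLt
  have hmod : (b.val + 4) % (n + 2) =
      if b.val + 4 < n + 2 then b.val + 4 else b.val + 4 - (n + 2) :=
    mod2 (by omega) (by omega)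
  constructor
  · rintro ⟨a, rfl⟩
    have hp := phiF_bounds hn a.isLt
    rw [colF_val hn, hmod]
    constructor <;> (split_ifs <;> omega)
  · rintro ⟨h1, h2⟩
    rw [hmod] at h2
    set t := i.val with htdef
    set d := (if b.val + 2 ≤ t then t - b.val - 2 else t + (n + 2) - b.val - 2) with hddef
    have hd0 : d ≠ 0 := by rw [hddef]; split_ifs <;> omega
    have hd2 : d ≠ 2 := by rw [hddef]; split_ifs at h2 <;> split_ifs <;> omega
    have hdle : d ≤ n + 1 := by rw [hddef]; split_ifs <;> omega
    have halt : (if d = 1 then 0 else d - 2) < n := by split_ifs <;> omega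
    refine ⟨⟨_, halt⟩, Fin.ext ?_⟩
    rw [colF_val hn]
    simp only
    have hphi : phiF (if d = 1 then 0 else d - 2) = d := by
      unfold phiF; split_ifs <;> omega
    rw [hphi]
    rw [hddef]
    split_ifs <;> omega

lemma case_ll {n p q : ℕ} (hn : 2 ≤ n) (hp : p = 1 ∨ (3 ≤ p ∧ p ≤ n + 1))
    (hq : q = 1 ∨ (3 ≤ q ∧ q ≤ n + 1)) (hpq : p ≠ q) :
    ∃ t, t < n + 2 ∧ (t = q ∨ t = (q + 1) % (n + 2)) ∧
      ¬(t = p ∨ t = (p + 1) % (n + 2)) := by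
  have hP1 : (p + 1) % (n + 2) = if p + 1 < n + 2 then p + 1 else p + 1 - (n + 2) :=
    mod2 (by omega) (by omega)
  have hQ1 : (q + 1) % (n + 2) = if q + 1 < n + 2 then q + 1 else q + 1 - (n + 2) :=
    mod2 (by omega) (by omega)
  rw [hP1, hQ1]
  by_cases hc : q = p ∨ q = (if p + 1 < n + 2 then p + 1 else p + 1 - (n + 2))
  · refine ⟨if q + 1 < n + 2 then q + 1 else q + 1 - (n + 2), ?_, Or.inr rfl, ?_⟩ <;>
      (split_ifs at * <;> omega)
  · exact ⟨q, by omega, Or.inl rfl, by split_ifs at * <;> omega⟩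

lemma case_rr {n x y : ℕ} (hn : 2 ≤ n) (hx : x < n) (hy : y < n) (hxy : x ≠ y) :
    ∃ t, t < n + 2 ∧ (t = y + 2 ∨ t = (y + 4) % (n + 2)) ∧
      ¬(t = x + 2 ∨ t = (x + 4) % (n + 2)) := by
  have hX : (x + 4) % (n + 2) = if x + 4 < n + 2 then x + 4 else x + 4 - (n + 2) :=
    mod2 (by omega) (by omega)
  have hY : (y + 4) % (n + 2) = if y + 4 < n + 2 then y + 4 else y + 4 - (n + 2) :=
    mod2 (by omega) (by omega)
  rw [hX, hY]
  by_cases hc : y + 2 = x + 2 ∨ y + 2 = (if x + 4 < n + 2 then x + 4 else x + 4 - (n + 2))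
  · refine ⟨if y + 4 < n + 2 then y + 4 else y + 4 - (n + 2), ?_, Or.inr rfl, ?_⟩ <;>
      (split_ifs at * <;> omega)
  · exact ⟨y + 2, by omega, Or.inl rfl, by split_ifs at * <;> omega⟩

lemma case_lr {n p x : ℕ} (hn : 2 ≤ n) (hp : p = 1 ∨ (3 ≤ p ∧ p ≤ n + 1)) (hx : x < n) :
    ∃ t, t < n + 2 ∧ (t = x + 2 ∨ t = (x + 4) % (n + 2)) ∧
      ¬(t = p ∨ t = (p + 1) % (n + 2)) := by
  have hP1 : (p + 1) % (n + 2) = if p + 1 < n + 2 then p + 1 else p + 1 - (n + 2) :=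
    mod2 (by omega) (by omega)
  have hX : (x + 4) % (n + 2) = if x + 4 < n + 2 then x + 4 else x + 4 - (n + 2) :=
    mod2 (by omega) (by omega)
  rw [hP1, hX]
  by_cases hc : x + 2 = p ∨ x + 2 = (if p + 1 < n + 2 then p + 1 else p + 1 - (n + 2))
  · refine ⟨if x + 4 < n + 2 then x + 4 else x + 4 - (n + 2), ?_, Or.inr rfl, ?_⟩ <;>
      (split_ifs at * <;> omega)
  · exact ⟨x + 2, by omega, Or.inl rfl, by split_ifs at * <;> omega⟩

lemma case_rl {n p x : ℕ} (hn : 2 ≤ n) (hp : p = 1 ∨ (3 ≤ p ∧ p ≤ n + 1)) (hx : x < n) :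
    ∃ t, t < n + 2 ∧ (t = p ∨ t = (p + 1) % (n + 2)) ∧
      ¬(t = x + 2 ∨ t = (x + 4) % (n + 2)) := by
  have hP1 : (p + 1) % (n + 2) = if p + 1 < n + 2 then p + 1 else p + 1 - (n + 2) :=
    mod2 (by omega) (by omega)
  have hX : (x + 4) % (n + 2) = if x + 4 < n + 2 then x + 4 else x + 4 - (n + 2) :=
    mod2 (by omega) (by omega)
  rw [hP1, hX]
  by_cases hc : p = x + 2 ∨ p = (if x + 4 < n + 2 then x + 4 else x + 4 - (n + 2))
  · refine ⟨if p + 1 < n + 2 then p + 1 else p + 1 - (n + 2), ?_, Or.inr rfl, ?_⟩ <;>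
      (split_ifs at * <;> omega)
  · exact ⟨p, by omega, Or.inl rfl, by split_ifs at * <;> omega⟩

/-! ### Basic facts about `K_{n,n}` -/

section Kpart
variable {n : ℕ}

local notation "KG" => completeBipartiteGraph (Fin n) (Fin n)

lemma kg_adj_lr (a b : Fin n) : (KG).Adj (Sum.inl a) (Sum.inr b) := by
  simp [completeBipartiteGraph]

lemma kg_edge_struct {e : Sym2 (Fin n ⊕ Fin n)} (he : e ∈ (KG).edgeSet) :
    ∃ a b, e = s(Sum.inl a, Sum.inr b) := by
  induction e using Sym2.ind with
  | _ x y =>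
    rw [SimpleGraph.mem_edgeSet] at he
    rcases x with a | a <;> rcases y with b | b <;>
      simp [completeBipartiteGraph] at he
    · exact ⟨a, b, rfl⟩
    · exact ⟨b, a, Sym2.eq_swap⟩

lemma kg_connected (hn : 1 ≤ n) : (KG).Connected := by
  rw [SimpleGraph.connected_iff]
  refine ⟨fun x y => ?_, ⟨Sum.inl ⟨0, hn⟩⟩⟩
  have key : ∀ z : Fin n ⊕ Fin n, (KG).Reachable z (Sum.inr (⟨0, hn⟩ : Fin n)) := by
    intro z
    rcases z with a | a
    · exact (kg_adj_lr a ⟨0, hn⟩).reachable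
    · rcases eq_or_ne a ⟨0, hn⟩ with rfl | h
      · rfl
      · exact ((kg_adj_lr ⟨0, hn⟩ a).symm.reachable).trans
          (kg_adj_lr ⟨0, hn⟩ ⟨0, hn⟩).reachable
  exact (key x).trans (key y).symm

lemma kg_edgeDist_eq (hn : 1 ≤ n) {e : Sym2 (Fin n ⊕ Fin n)} (he : e ∈ (KG).edgeSet)
    (v : Fin n ⊕ Fin n) : edgeDist (KG) v e = if v ∈ e then 0 else 1 := by
  obtain ⟨a, b, rfl⟩ := kg_edge_struct he
  have hd : edgeDist (KG) v s(Sum.inl a, Sum.inr b)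
      = min ((KG).dist v (Sum.inl a)) ((KG).dist v (Sum.inr b)) := rfl
  rw [hd]
  by_cases hv : v ∈ s(Sum.inl a, Sum.inr b)
  · rw [if_pos hv]
    rw [Sym2.mem_iff] at hv
    rcases hv with rfl | rfl <;> simp [SimpleGraph.dist_self]
  · rw [if_neg hv]
    rw [Sym2.mem_iff] at hv
    push_neg at hv
    obtain ⟨h1, h2⟩ := hv
    rcases v with x | x
    · have hadj : (KG).dist (Sum.inl x) (Sum.inr b) = 1 :=
        SimpleGraph.dist_eq_one_iff_adj.mpr (kg_adj_lr x b)
      have hpos : 0 < (KG).dist (Sum.inl x) (Sum.inl a) :=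
        (kg_connected hn).pos_dist_of_ne h1
      omega
    · have hadj : (KG).dist (Sum.inr x) (Sum.inl a) = 1 :=
        SimpleGraph.dist_eq_one_iff_adj.mpr (kg_adj_lr a x).symm
      have hpos : 0 < (KG).dist (Sum.inr x) (Sum.inr b) :=
        (kg_connected hn).pos_dist_of_ne h2
      omega

open Classical in
lemma kg_classDist_eq (hn : 1 ≤ n) {k : ℕ} (c : Sym2 (Fin n ⊕ Fin n) → Fin k)
    (v : Fin n ⊕ Fin n) (i : Fin k) :
    classDist (KG) c v i =
      if ∃ e ∈ (KG).edgeSet, c e = i ∧ v ∈ e then 0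
      else if ∃ e ∈ (KG).edgeSet, c e = i then (1 : ℕ∞) else (⊤ : ℕ∞) := by
  unfold classDist
  split_ifs with h1 h2
  · obtain ⟨e, he, hce, hve⟩ := h1
    refine le_antisymm ?_ (zero_le)
    have : (⨅ e ∈ {e | e ∈ (KG).edgeSet ∧ c e = i}, (edgeDist (KG) v e : ℕ∞))
        ≤ (edgeDist (KG) v e : ℕ∞) := biInf_le _ ⟨he, hce⟩
    refine this.trans ?_
    rw [kg_edgeDist_eq hn he, if_pos hve]
    simp
  · obtain ⟨e, he, hce⟩ := h2
    refine le_antisymm ?_ ?_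
    · have : (⨅ e ∈ {e | e ∈ (KG).edgeSet ∧ c e = i}, (edgeDist (KG) v e : ℕ∞))
          ≤ (edgeDist (KG) v e : ℕ∞) := biInf_le _ ⟨he, hce⟩
      refine this.trans ?_
      rw [kg_edgeDist_eq hn he]
      split_ifs with hv
      · exact absurd ⟨e, he, hce, hv⟩ h1
      · simp
    · refine le_iInf₂ fun f hf => ?_
      obtain ⟨hfe, hfc⟩ := hf
      rw [kg_edgeDist_eq hn hfe]
      split_ifs with hv
      · exact absurd ⟨f, hfe, hfc, hv⟩ h1
      · simp
  · have : {e | e ∈ (KG).edgeSet ∧ c e = i} = ∅ := by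
      ext e; simp only [Set.mem_setOf_eq, Set.mem_empty_iff_false, iff_false]
      rintro ⟨he, hce⟩; exact h2 ⟨e, he, hce⟩
    rw [this]
    simp

lemma kg_incl {k : ℕ} (c : Sym2 (Fin n ⊕ Fin n) → Fin k) (a : Fin n) (i : Fin k) :
    (∃ e ∈ (KG).edgeSet, c e = i ∧ Sum.inl a ∈ e) ↔
    ∃ b : Fin n, c s(Sum.inl a, Sum.inr b) = i := by
  constructor
  · rintro ⟨e, he, hce, hve⟩
    obtain ⟨a', b, rfl⟩ := kg_edge_struct he
    rw [Sym2.mem_iff] at hve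
    rcases hve with h | h
    · obtain rfl : a = a' := Sum.inl.inj h
      exact ⟨b, hce⟩
    · exact absurd h (by simp)
  · rintro ⟨b, hb⟩
    exact ⟨s(Sum.inl a, Sum.inr b), (SimpleGraph.mem_edgeSet _).mpr (kg_adj_lr a b), hb,
      Sym2.mem_mk_left _ _⟩

lemma kg_incr {k : ℕ} (c : Sym2 (Fin n ⊕ Fin n) → Fin k) (b : Fin n) (i : Fin k) :
    (∃ e ∈ (KG).edgeSet, c e = i ∧ Sum.inr b ∈ e) ↔
    ∃ a : Fin n, c s(Sum.inl a, Sum.inr b) = i := by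
  constructor
  · rintro ⟨e, he, hce, hve⟩
    obtain ⟨a, b', rfl⟩ := kg_edge_struct he
    rw [Sym2.mem_iff] at hve
    rcases hve with h | h
    · exact absurd h (by simp)
    · obtain rfl : b = b' := Sum.inr.inj h
      exact ⟨a, hce⟩
  · rintro ⟨a, ha⟩
    exact ⟨s(Sum.inl a, Sum.inr b), (SimpleGraph.mem_edgeSet _).mpr (kg_adj_lr a b), ha,
      Sym2.mem_mk_right _ _⟩

/-! ### Lower bound -/

open Classical in
lemma kg_lower (hn : 2 ≤ n) {k : ℕ} (c : Sym2 (Fin n ⊕ Fin n) → Fin k)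
    (hc : IsEdgeLocatingColoring KG c) : n + 2 ≤ k := by
  by_contra hk
  push_neg at hk
  have hn1 : 1 ≤ n := by omega
  set S : (Fin n ⊕ Fin n) → Finset (Fin k) :=
    fun v => Finset.univ.filter (fun i => ∃ e ∈ (KG).edgeSet, c e = i ∧ v ∈ e) with hS
  have hmem : ∀ v i, i ∈ S v ↔ ∃ e ∈ (KG).edgeSet, c e = i ∧ v ∈ e := by
    intro v i; simp [hS]
  have hcard : ∀ v, (S v).card = n := by
    intro v
    rcases v with a | a
    · have : S (Sum.inl a) = Finset.univ.image (fun b : Fin n => c s(Sum.inl a, Sum.inr b)) := by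
        ext i
        rw [hmem, kg_incl]
        simp [eq_comm]
      rw [this, Finset.card_image_of_injective _ ?_, Finset.card_univ, Fintype.card_fin]
      intro b b' hbb
      by_contra hne
      refine hc.1 s(Sum.inl a, Sum.inr b) ((SimpleGraph.mem_edgeSet _).mpr (kg_adj_lr a b))
        s(Sum.inl a, Sum.inr b') ((SimpleGraph.mem_edgeSet _).mpr (kg_adj_lr a b')) ?_
        ⟨Sum.inl a, Sym2.mem_mk_left _ _, Sym2.mem_mk_left _ _⟩ hbb
      simp [Sym2.mk_eq_mk_iff]
      exact hne
    · have : S (Sum.inr a) = Finset.univ.image (fun b : Fin n => c s(Sum.inl b, Sum.inr a)) := by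
        ext i
        rw [hmem, kg_incr]
        simp [eq_comm]
      rw [this, Finset.card_image_of_injective _ ?_, Finset.card_univ, Fintype.card_fin]
      intro b b' hbb
      by_contra hne
      refine hc.1 s(Sum.inl b, Sum.inr a) ((SimpleGraph.mem_edgeSet _).mpr (kg_adj_lr b a))
        s(Sum.inl b', Sum.inr a) ((SimpleGraph.mem_edgeSet _).mpr (kg_adj_lr b' a)) ?_
        ⟨Sum.inr a, Sym2.mem_mk_right _ _, Sym2.mem_mk_right _ _⟩ hbb
      simp [Sym2.mk_eq_mk_iff]
      exact hne
  have hSinj : Function.Injective S := by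
    intro u v huv
    by_contra hne
    obtain ⟨i, hi⟩ := hc.2 u v hne
    apply hi
    rw [kg_classDist_eq hn1 c u i, kg_classDist_eq hn1 c v i]
    have : (∃ e ∈ (KG).edgeSet, c e = i ∧ u ∈ e) ↔ (∃ e ∈ (KG).edgeSet, c e = i ∧ v ∈ e) := by
      rw [← hmem, ← hmem, huv]
    exact if_congr this rfl rfl
  have hinj2 : Function.Injective
      (fun v => (⟨S v, hcard v⟩ : {s : Finset (Fin k) // s.card = n})) := by
    intro u v h
    exact hSinj (congrArg Subtype.val h)
  have hle := Fintype.card_le_of_injective _ hinj2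
  rw [Fintype.card_finset_len] at hle
  simp [Fintype.card_fin] at hle
  have h2 : k.choose n ≤ (n + 1).choose n := Nat.choose_le_choose n (by omega)
  rw [Nat.choose_succ_self_right] at h2
  omega

/-! ### Upper bound: the explicit coloring -/

def colc (hn : 2 ≤ n) : Sym2 (Fin n ⊕ Fin n) → Fin (n + 2) :=
  Sym2.lift ⟨fun x y =>
    match x, y with
    | Sum.inl a, Sum.inr b => colF n hn a b
    | Sum.inr b, Sum.inl a => colF n hn a b
    | _, _ => ⟨0, by omega⟩,
   by rintro (a | a) (b | b) <;> rfl⟩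

lemma colc_mk (hn : 2 ≤ n) (a b : Fin n) :
    colc hn s(Sum.inl a, Sum.inr b) = colF n hn a b := rfl

lemma colc_locating (hn : 2 ≤ n) : IsEdgeLocatingColoring KG (colc hn) := by
  have hn1 : 1 ≤ n := by omega
  constructor
  · -- proper edge coloring
    intro e he f hf hef hx hcc
    obtain ⟨a, b, rfl⟩ := kg_edge_struct he
    obtain ⟨a', b', rfl⟩ := kg_edge_struct hf
    rw [colc_mk, colc_mk] at hcc
    obtain ⟨x, hxe, hxf⟩ := hx
    rw [Sym2.mem_iff] at hxe hxf
    rcases hxe with rfl | rfl <;> rcases hxf with h | h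
    · obtain rfl : a = a' := Sum.inl.inj h
      obtain rfl : b = b' := colF_inj_right hn a b b' hcc
      exact hef rfl
    · exact absurd h (by simp)
    · exact absurd h (by simp)
    · obtain rfl : b = b' := Sum.inr.inj h
      obtain rfl : a = a' := colF_inj_left hn a a' b hcc
      exact hef rfl
  · -- locating
    intro u v huv
    have distinguish : ∀ (t : ℕ) (ht : t < n + 2),
        (∃ e ∈ (KG).edgeSet, colc hn e = ⟨t, ht⟩ ∧ u ∈ e) →
        ¬(∃ e ∈ (KG).edgeSet, colc hn e = ⟨t, ht⟩ ∧ v ∈ e) →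
        ∃ i, classDist KG (colc hn) u i ≠ classDist KG (colc hn) v i := by
      intro t ht hu hv
      refine ⟨⟨t, ht⟩, ?_⟩
      rw [kg_classDist_eq hn1, kg_classDist_eq hn1, if_pos hu, if_neg hv]
      split_ifs <;> simp
    rcases u with a | a <;> rcases v with a' | a'
    · -- both left
      have haa : a ≠ a' := fun h => huv (congrArg Sum.inl h)
      have hpq : phiF a.val ≠ phiF a'.val := fun h => haa (Fin.ext (phiF_inj h))
      obtain ⟨t, ht, hmiss, hpres⟩ :=
        case_ll hn (phiF_bounds hn a.isLt) (phiF_bounds hn a'.isLt) hpq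
      push_neg at hpres
      refine distinguish t ht ?_ ?_
      · rw [kg_incl]
        exact (exists_b_iff hn a ⟨t, ht⟩).mpr ⟨hpres.1, hpres.2⟩
      · rw [kg_incl]
        intro h
        obtain ⟨h1, h2⟩ := (exists_b_iff hn a' ⟨t, ht⟩).mp h
        rcases hmiss with h | h
        · exact h1 h
        · exact h2 h
    · -- left, right
      obtain ⟨t, ht, hmiss, hpres⟩ := case_lr hn (phiF_bounds hn a.isLt) a'.isLt
      push_neg at hpres
      refine distinguish t ht ?_ ?_
      · rw [kg_incl]
        exact (exists_b_iff hn a ⟨t, ht⟩).mpr ⟨hpres.1, hpres.2⟩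
      · rw [kg_incr]
        intro h
        obtain ⟨h1, h2⟩ := (exists_a_iff hn a' ⟨t, ht⟩).mp h
        rcases hmiss with h | h
        · exact h1 h
        · exact h2 h
    · -- right, left
      obtain ⟨t, ht, hmiss, hpres⟩ := case_rl hn (phiF_bounds hn a'.isLt) a.isLt
      push_neg at hpres
      refine distinguish t ht ?_ ?_
      · rw [kg_incr]
        exact (exists_a_iff hn a ⟨t, ht⟩).mpr ⟨hpres.1, hpres.2⟩
      · rw [kg_incl]
        intro h
        obtain ⟨h1, h2⟩ := (exists_b_iff hn a' ⟨t, ht⟩).mp h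
        rcases hmiss with h | h
        · exact h1 h
        · exact h2 h
    · -- both right
      have haa : a.val ≠ a'.val := fun h => huv (congrArg Sum.inr (Fin.ext h))
      obtain ⟨t, ht, hmiss, hpres⟩ := case_rr hn a.isLt a'.isLt haa
      push_neg at hpres
      refine distinguish t ht ?_ ?_
      · rw [kg_incr]
        exact (exists_a_iff hn a ⟨t, ht⟩).mpr ⟨hpres.1, hpres.2⟩
      · rw [kg_incr]
        intro h
        obtain ⟨h1, h2⟩ := (exists_a_iff hn a' ⟨t, ht⟩).mp h
        rcases hmiss with h | h
        · exact h1 h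
        · exact h2 h

end Kpart

/-- For every integer `n ≥ 2`, the edge-locating chromatic number of `K_{n,n}` equals `n + 2`. -/
theorem stmt_4 (n : ℕ) (hn : 2 ≤ n) :
    edgeLocatingChromaticNumber (completeBipartiteGraph (Fin n) (Fin n)) = n + 2 := by
  have hmem : (n + 2) ∈
      {k | ∃ c : Sym2 (Fin n ⊕ Fin n) → Fin k,
        IsEdgeLocatingColoring (completeBipartiteGraph (Fin n) (Fin n)) c} :=
    ⟨colc hn, colc_locating hn⟩
  refine le_antisymm (Nat.sInf_le hmem) (le_csInf ⟨n + 2, hmem⟩ ?_)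
  rintro k ⟨c, hc⟩
  exact kg_lower hn c hc
end
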